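/- arXiv:2312.05002 — 14 statements merged into one kernel-verified Lean document; each statement's English description precedes it below -/
import Mathlib

section
/- If a and b are elements of a ring, a is idempotent (a^2 = a), and a, b are a-weakly commutative (there exists c with a*b = c*a and b*a = a*c), then a*b = b*a. -/
theorem stmt_1 {R : Type*} [Ring R] (a b : R) (ha : a ^ 2 = a)
    (h : ∃ c : R, a * b = c * a ∧ b * a = a * c) :
    a * b = b * a := by
  obtain ⟨c, h1, h2⟩ := h
  have ha' : a * a = a := by rw [← sq]; exact ha
  calc a * b = c * a := h1
    _ = c * (a * a) := by rw [ha']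
    _ = (c * a) * a := by rw [mul_assoc]
    _ = (a * b) * a := by rw [h1]
    _ = a * (b * a) := by rw [mul_assoc]
    _ = a * (a * c) := by rw [h2]
    _ = (a * a) * c := by rw [mul_assoc]
    _ = a * c := by rw [ha']
    _ = b * a := h2.symm
end

section
/- Let R be a ring and a, b ∈ R both nilpotent. If a, b are {a,b}-weakly commutative, i.e., there exist c₁, c₂ ∈ R with a*b = c₁*a, b*a = a*c₁, a*b = b*c₂, and b*a = c₂*b, then a + b is nilpotent. -/
theorem stmt_3 {R : Type*} [Ring R] (a b : R)
    (ha : IsNilpotent a) (hb : IsNilpotent b)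
    (h1 : ∃ c₁ : R, a * b = c₁ * a ∧ b * a = a * c₁)
    (h2 : ∃ c₂ : R, a * b = b * c₂ ∧ b * a = c₂ * b) :
    IsNilpotent (a + b) := by
  obtain ⟨c₁, hc1, hc2⟩ := h1
  obtain ⟨c₂, hd1, hd2⟩ := h2
  obtain ⟨k₁, hka⟩ := ha
  obtain ⟨k₂, hkb⟩ := hb
  -- a*a commutes with b
  have cAb : Commute (a*a) b := by
    show (a*a)*b = b*(a*a)
    calc (a*a)*b = a*(a*b) := by noncomm_ring
      _ = a*(c₁*a) := by rw [hc1]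
      _ = (a*c₁)*a := by noncomm_ring
      _ = (b*a)*a := by rw [hc2]
      _ = b*(a*a) := by noncomm_ring
  -- b*b commutes with a
  have cBa : Commute (b*b) a := by
    show (b*b)*a = a*(b*b)
    calc (b*b)*a = b*(b*a) := by noncomm_ring
      _ = b*(c₂*b) := by rw [hd2]
      _ = (b*c₂)*b := by noncomm_ring
      _ = (a*b)*b := by rw [hd1]
      _ = a*(b*b) := by noncomm_ring
  -- a*a commutes with c₁
  have cAc : Commute (a*a) c₁ := by
    show (a*a)*c₁ = c₁*(a*a)
    calc (a*a)*c₁ = a*(a*c₁) := by noncomm_ring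
      _ = a*(b*a) := by rw [hc2]
      _ = (a*b)*a := by noncomm_ring
      _ = (c₁*a)*a := by rw [hc1]
      _ = c₁*(a*a) := by noncomm_ring
  -- b*b commutes with c₂
  have cBc : Commute (b*b) c₂ := by
    show (b*b)*c₂ = c₂*(b*b)
    calc (b*b)*c₂ = b*(b*c₂) := by noncomm_ring
      _ = b*(a*b) := by rw [hd1]
      _ = (b*a)*b := by noncomm_ring
      _ = (c₂*b)*b := by rw [hd2]
      _ = c₂*(b*b) := by noncomm_ring
  -- (a*b)^2 = (a*a)*(c₁*b)
  have sq_ab : (a*b)*(a*b) = (a*a)*(c₁*b) := by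
    calc (a*b)*(a*b) = a*((b*a)*b) := by noncomm_ring
      _ = a*((a*c₁)*b) := by rw [hc2]
      _ = (a*a)*(c₁*b) := by noncomm_ring
  -- (b*a)^2 = (a*a)*(b*c₁)
  have sq_ba : (b*a)*(b*a) = (a*a)*(b*c₁) := by
    calc (b*a)*(b*a) = (a*c₁)*(a*c₁) := by rw [hc2]
      _ = a*((c₁*a)*c₁) := by noncomm_ring
      _ = a*((a*b)*c₁) := by rw [hc1]
      _ = (a*a)*(b*c₁) := by noncomm_ring
  -- power formulas
  have key_ab : ∀ m : ℕ, (a*b)^(2*m) = (a*a)^m * (c₁*b)^m := by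
    intro m
    induction m with
    | zero => simp
    | succ n ih =>
      have hcomm : Commute (a*a) ((c₁*b)^n) := (cAc.mul_right cAb).pow_right n
      calc (a*b)^(2*(n+1)) = (a*b)^(2*n) * ((a*b)*(a*b)) := by
            rw [← pow_two, ← pow_add]; ring_nf
        _ = (a*a)^n * (c₁*b)^n * ((a*a)*(c₁*b)) := by rw [ih, sq_ab]
        _ = (a*a)^n * ((c₁*b)^n * (a*a)) * (c₁*b) := by noncomm_ring
        _ = (a*a)^n * ((a*a) * (c₁*b)^n) * (c₁*b) := by rw [hcomm.eq]
        _ = ((a*a)^n * (a*a)) * ((c₁*b)^n * (c₁*b)) := by noncomm_ring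
        _ = (a*a)^(n+1) * (c₁*b)^(n+1) := by rw [pow_succ, pow_succ]
  have key_ba : ∀ m : ℕ, (b*a)^(2*m) = (a*a)^m * (b*c₁)^m := by
    intro m
    induction m with
    | zero => simp
    | succ n ih =>
      have hcomm : Commute (a*a) ((b*c₁)^n) := (cAb.mul_right cAc).pow_right n
      calc (b*a)^(2*(n+1)) = (b*a)^(2*n) * ((b*a)*(b*a)) := by
            rw [← pow_two, ← pow_add]; ring_nf
        _ = (a*a)^n * (b*c₁)^n * ((a*a)*(b*c₁)) := by rw [ih, sq_ba]
        _ = (a*a)^n * ((b*c₁)^n * (a*a)) * (b*c₁) := by noncomm_ring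
        _ = (a*a)^n * ((a*a) * (b*c₁)^n) * (b*c₁) := by rw [hcomm.eq]
        _ = ((a*a)^n * (a*a)) * ((b*c₁)^n * (b*c₁)) := by noncomm_ring
        _ = (a*a)^(n+1) * (b*c₁)^(n+1) := by rw [pow_succ, pow_succ]
  have hA0 : (a*a)^k₁ = 0 := by
    rw [(Commute.refl a).mul_pow, hka, zero_mul]
  have n_ab : IsNilpotent (a*b) := ⟨2*k₁, by rw [key_ab k₁, hA0, zero_mul]⟩
  have n_ba : IsNilpotent (b*a) := ⟨2*k₁, by rw [key_ba k₁, hA0, zero_mul]⟩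
  have cAB : Commute (a*a) (b*b) := cAb.mul_right cAb
  -- Commute (a*b) (b*a)
  have e1 : (a*b)*(b*a) = (b*b)*(a*a) := by
    calc (a*b)*(b*a) = (a*(b*b))*a := by noncomm_ring
      _ = ((b*b)*a)*a := by rw [← cBa.eq]
      _ = (b*b)*(a*a) := by noncomm_ring
  have e2 : (b*a)*(a*b) = (a*a)*(b*b) := by
    calc (b*a)*(a*b) = (b*(a*a))*b := by noncomm_ring
      _ = ((a*a)*b)*b := by rw [← cAb.eq]
      _ = (a*a)*(b*b) := by noncomm_ring
  have c_ab_ba : Commute (a*b) (b*a) := by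
    show (a*b)*(b*a) = (b*a)*(a*b)
    rw [e1, e2, cAB.eq]
  -- Commute (a*a) with a*b and b*a
  have cA_ab : Commute (a*a) (a*b) := by
    show (a*a)*(a*b) = (a*b)*(a*a)
    calc (a*a)*(a*b) = (a*a)*(c₁*a) := by rw [hc1]
      _ = ((a*a)*c₁)*a := by noncomm_ring
      _ = (c₁*(a*a))*a := by rw [cAc.eq]
      _ = (c₁*a)*(a*a) := by noncomm_ring
      _ = (a*b)*(a*a) := by rw [hc1]
  have cA_ba : Commute (a*a) (b*a) := by
    show (a*a)*(b*a) = (b*a)*(a*a)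
    calc (a*a)*(b*a) = (a*a)*(a*c₁) := by rw [hc2]
      _ = a*((a*a)*c₁) := by noncomm_ring
      _ = a*(c₁*(a*a)) := by rw [cAc.eq]
      _ = (a*c₁)*(a*a) := by noncomm_ring
      _ = (b*a)*(a*a) := by rw [hc2]
  have cB_ab : Commute (b*b) (a*b) := by
    show (b*b)*(a*b) = (a*b)*(b*b)
    calc (b*b)*(a*b) = (b*b)*(b*c₂) := by rw [hd1]
      _ = b*((b*b)*c₂) := by noncomm_ring
      _ = b*(c₂*(b*b)) := by rw [cBc.eq]
      _ = (b*c₂)*(b*b) := by noncomm_ring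
      _ = (a*b)*(b*b) := by rw [hd1]
  have cB_ba : Commute (b*b) (b*a) := by
    show (b*b)*(b*a) = (b*a)*(b*b)
    calc (b*b)*(b*a) = (b*b)*(c₂*b) := by rw [hd2]
      _ = ((b*b)*c₂)*b := by noncomm_ring
      _ = (c₂*(b*b))*b := by rw [cBc.eq]
      _ = (c₂*b)*(b*b) := by noncomm_ring
      _ = (b*a)*(b*b) := by rw [hd2]
  have n_A : IsNilpotent (a*a) := ⟨k₁, hA0⟩
  have n_B : IsNilpotent (b*b) := ⟨k₂, by rw [(Commute.refl b).mul_pow, hkb, zero_mul]⟩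
  have n_sum : IsNilpotent (a*b + b*a) := c_ab_ba.isNilpotent_add n_ab n_ba
  have n_Bsum : IsNilpotent (b*b + (a*b + b*a)) :=
    (cB_ab.add_right cB_ba).isNilpotent_add n_B n_sum
  have n_tot : IsNilpotent (a*a + (b*b + (a*b + b*a))) :=
    (cAB.add_right (cA_ab.add_right cA_ba)).isNilpotent_add n_A n_Bsum
  have hsq : (a+b)*(a+b) = a*a + (b*b + (a*b + b*a)) := by noncomm_ring
  obtain ⟨n, hn⟩ := n_tot
  exact ⟨2*n, by rw [pow_mul, pow_two, hsq, hn]⟩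
end

section
/- Let A be a unital Banach algebra over ℂ, a ∈ A invertible, b ∈ A nilpotent, and suppose there exists c ∈ A with a*b = b*c and b*a = c*b (b-weak commutativity), and additionally a^2*b = b*a^2. Then a + b is invertible. -/
theorem stmt_5 {A : Type*} [NormedRing A] [NormedAlgebra ℂ A] [CompleteSpace A]
    (a b : A) (ha : IsUnit a) (hb : IsNilpotent b)
    (h : ∃ c : A, a * b = b * c ∧ b * a = c * b)
    (h2 : a ^ 2 * b = b * a ^ 2) :
    IsUnit (a + b) := by
  obtain ⟨c, hab, hba⟩ := h
  obtain ⟨k, hk⟩ := hb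
  obtain ⟨u, hu⟩ := ha
  subst hu
  set v : A := ↑u⁻¹ with hv
  have hvu : v * (u : A) = 1 := u.inv_mul
  have huv : (u : A) * v = 1 := u.mul_inv
  -- b² commutes with a
  have hab2 : (u : A) * b ^ 2 = b ^ 2 * (u : A) := by
    have h1 : (u : A) * (b * b) = b * (c * b) := by rw [← mul_assoc, hab, mul_assoc]
    rw [sq, h1, ← hba, ← mul_assoc]
  -- b² commutes with c
  have hcb2 : c * b ^ 2 = b ^ 2 * c := by
    have h1 : c * (b * b) = b * ((u : A) * b) := by rw [← mul_assoc, ← hba, mul_assoc]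
    rw [sq, h1, hab, ← mul_assoc]
  -- b² commutes with v
  have hb2v : Commute v (b ^ 2) := (Commute.units_inv_left (u := u) hab2)
  -- b commutes with v ^ 2
  have hbv2 : Commute (v ^ 2) b := by
    have hc2 : Commute ((u ^ 2 : Aˣ) : A) b := by
      show ((u ^ 2 : Aˣ) : A) * b = b * ((u ^ 2 : Aˣ) : A)
      rw [Units.val_pow_eq_pow_val]; exact h2
    have := hc2.units_inv_left
    rwa [← inv_pow, Units.val_pow_eq_pow_val] at this
  have hbv : b * v = v ^ 2 * b * (u : A) := by
    have hvv : v ^ 2 * (u : A) = v := by rw [sq, mul_assoc, hvu, mul_one]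
    calc b * v = b * (v ^ 2 * (u : A)) := by rw [hvv]
      _ = b * v ^ 2 * (u : A) := by rw [mul_assoc]
      _ = v ^ 2 * b * (u : A) := by rw [← hbv2.eq]
  -- key: (v*b)^2 = b^2 * (v^3 * c)
  have hx2 : (v * b) ^ 2 = b ^ 2 * (v ^ 3 * c) := by
    have e1 : (v * b) ^ 2 = v * (b * v) * b := by rw [sq]; noncomm_ring
    have e2 : v * (v ^ 2 * b * (u : A)) * b = v ^ 3 * (b * ((u : A) * b)) := by
      rw [pow_succ' v 2]; noncomm_ring
    have e3 : v ^ 3 * (b * (b * c)) = v ^ 3 * (b ^ 2 * c) := by rw [sq]; noncomm_ring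
    have hv3b2 : Commute (v ^ 3) (b ^ 2) := hb2v.pow_left 3
    calc (v * b) ^ 2 = v * (b * v) * b := e1
      _ = v * (v ^ 2 * b * (u : A)) * b := by rw [hbv]
      _ = v ^ 3 * (b * ((u : A) * b)) := e2
      _ = v ^ 3 * (b * (b * c)) := by rw [hab]
      _ = v ^ 3 * (b ^ 2 * c) := e3
      _ = v ^ 3 * (c * b ^ 2) := by rw [hcb2]
      _ = b ^ 2 * (v ^ 3 * c) := by
          rw [← mul_assoc]
          exact (Commute.mul_left hv3b2 hcb2).eq
  have hcomm : Commute (b ^ 2) (v ^ 3 * c) :=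
    ((hb2v.pow_left 3).symm).mul_right hcb2.symm
  have hnil : IsNilpotent (v * b) := by
    refine ⟨2 * k, ?_⟩
    calc (v * b) ^ (2 * k) = ((v * b) ^ 2) ^ k := by rw [← pow_mul]
      _ = (b ^ 2 * (v ^ 3 * c)) ^ k := by rw [hx2]
      _ = (b ^ 2) ^ k * (v ^ 3 * c) ^ k := hcomm.mul_pow k
      _ = 0 := by rw [← pow_mul, mul_comm 2 k, pow_mul, hk]; simp
  have hone : IsUnit (1 + v * b) := hnil.isUnit_one_add
  have key : (u : A) + b = (u : A) * (1 + v * b) := by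
    rw [mul_add, mul_one, ← mul_assoc, huv, one_mul]
  rw [key]
  exact (Units.isUnit u).mul hone
end

section
/- Let R be a unital ring, a ∈ R invertible, b ∈ R nilpotent, and suppose a, b are {a,b}-weakly commutative (there exist c₁, c₂ with a*b = c₁*a, b*a = a*c₁, a*b = b*c₂, b*a = c₂*b). Then a + b is invertible. -/
theorem stmt_6 {R : Type*} [Ring R] (a b : R) (ha : IsUnit a) (hb : IsNilpotent b)
    (h1 : ∃ c₁ : R, a * b = c₁ * a ∧ b * a = a * c₁)
    (h2 : ∃ c₂ : R, a * b = b * c₂ ∧ b * a = c₂ * b) :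
    IsUnit (a + b) := by
  obtain ⟨C, hC1, hC2⟩ := h1
  obtain ⟨D, hD1, hD2⟩ := h2
  obtain ⟨n, hbn⟩ := hb
  set u : R := ↑ha.unit⁻¹ with hu
  have hau : a * u = 1 := ha.mul_val_inv
  have hua : u * a = 1 := ha.val_inv_mul
  have hu' : ∀ x : R, u * (a * x) = x := fun x => by rw [← mul_assoc, hua, one_mul]
  have ha' : ∀ x : R, a * (u * x) = x := fun x => by rw [← mul_assoc, hau, one_mul]
  -- f1 : b * u = u * C
  have f1 : b * u = u * C := by
    have h : u * (a * b) * u = u * (C * a) * u := by rw [hC1]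
    calc b * u = u * (a * (b * u)) := (hu' _).symm
      _ = u * (a * b) * u := by noncomm_ring
      _ = u * (C * a) * u := h
      _ = u * (C * (a * u)) := by noncomm_ring
      _ = u * C := by rw [hau, mul_one]
  -- f2 : u * b = C * u
  have f2 : u * b = C * u := by
    have h : u * (b * a) * u = u * (a * C) * u := by rw [hC2]
    calc u * b = u * (b * (a * u)) := by rw [hau, mul_one]
      _ = u * (b * a) * u := by noncomm_ring
      _ = u * (a * C) * u := h
      _ = u * (a * (C * u)) := by noncomm_ring
      _ = C * u := hu' _
  -- f3 : C = a * b * u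
  have f3 : C = a * b * u := by
    rw [hC1, mul_assoc, hau, mul_one]
  -- f4 : b * C = D * (b^2 * u)
  have f4 : b * C = D * (b ^ 2 * u) := by
    rw [f3]
    calc b * (a * b * u) = (b * a) * b * u := by noncomm_ring
      _ = (D * b) * b * u := by rw [hD2]
      _ = D * (b ^ 2 * u) := by noncomm_ring
  -- u^2 commutes with b and with C
  have f5 : u * (u * b) = b * (u * u) := by
    rw [f2, ← mul_assoc, ← f1, mul_assoc]
  have f6 : u * (u * C) = C * (u * u) := by
    rw [← f1, ← mul_assoc, f2, mul_assoc]
  -- claim B : u^(2j) commutes with b and C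
  have fB : ∀ j : ℕ, u ^ (2 * j) * b = b * u ^ (2 * j) ∧ u ^ (2 * j) * C = C * u ^ (2 * j) := by
    intro j
    induction j with
    | zero => simp
    | succ j ih =>
      obtain ⟨ih1, ih2⟩ := ih
      constructor
      · calc u ^ (2 * (j + 1)) * b = u ^ (2 * j) * (u * (u * b)) := by
              rw [mul_add, mul_one, pow_add, pow_two]; noncomm_ring
          _ = u ^ (2 * j) * (b * (u * u)) := by rw [f5]
          _ = (u ^ (2 * j) * b) * (u * u) := by noncomm_ring
          _ = b * u ^ (2 * j) * (u * u) := by rw [ih1]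
          _ = b * u ^ (2 * (j + 1)) := by rw [mul_add, mul_one, pow_add, pow_two]; noncomm_ring
      · calc u ^ (2 * (j + 1)) * C = u ^ (2 * j) * (u * (u * C)) := by
              rw [mul_add, mul_one, pow_add, pow_two]; noncomm_ring
          _ = u ^ (2 * j) * (C * (u * u)) := by rw [f6]
          _ = (u ^ (2 * j) * C) * (u * u) := by noncomm_ring
          _ = C * u ^ (2 * j) * (u * u) := by rw [ih2]
          _ = C * u ^ (2 * (j + 1)) := by rw [mul_add, mul_one, pow_add, pow_two]; noncomm_ring
  -- odd powers: u^(2j+1) * b = C * u^(2j+1)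
  have fOdd : ∀ j : ℕ, u ^ (2 * j + 1) * b = C * u ^ (2 * j + 1) := by
    intro j
    calc u ^ (2 * j + 1) * b = u ^ (2 * j) * (u * b) := by rw [pow_succ]; noncomm_ring
      _ = u ^ (2 * j) * (C * u) := by rw [f2]
      _ = (u ^ (2 * j) * C) * u := by noncomm_ring
      _ = C * u ^ (2 * j) * u := by rw [(fB j).2]
      _ = C * u ^ (2 * j + 1) := by rw [pow_succ]; noncomm_ring
  -- claim A : b^(k+1) * C = s * (b^(k+2) * u) with s ∈ {D, a}
  have fA : ∀ k : ℕ, b ^ (k + 1) * C = D * (b ^ (k + 2) * u) ∨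
      b ^ (k + 1) * C = a * (b ^ (k + 2) * u) := by
    intro k
    induction k with
    | zero => left; rw [pow_one, f4]
    | succ k ih =>
      rcases ih with h | h
      · right
        calc b ^ (k + 2) * C = b * (b ^ (k + 1) * C) := by rw [pow_succ']; noncomm_ring
          _ = b * (D * (b ^ (k + 2) * u)) := by rw [h]
          _ = (b * D) * b ^ (k + 2) * u := by noncomm_ring
          _ = (a * b) * b ^ (k + 2) * u := by rw [← hD1]
          _ = a * (b ^ (k + 3) * u) := by
              rw [show b ^ (k + 3) = b * b ^ (k + 2) by
                rw [show k + 3 = (k + 2) + 1 by omega, pow_succ']]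
              noncomm_ring
      · left
        calc b ^ (k + 2) * C = b * (b ^ (k + 1) * C) := by rw [pow_succ']; noncomm_ring
          _ = b * (a * (b ^ (k + 2) * u)) := by rw [h]
          _ = (b * a) * b ^ (k + 2) * u := by noncomm_ring
          _ = (D * b) * b ^ (k + 2) * u := by rw [hD2]
          _ = D * (b ^ (k + 3) * u) := by
              rw [show b ^ (k + 3) = b * b ^ (k + 2) by
                rw [show k + 3 = (k + 2) + 1 by omega, pow_succ']]
              noncomm_ring
  -- main claim : (b*u)^(k+2) = l * (b^(k+2) * u^(2k+3))
  have fMain : ∀ k : ℕ, ∃ l : R, (b * u) ^ (k + 2) = l * (b ^ (k + 2) * u ^ (2 * k + 3)) := by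
    intro k
    induction k with
    | zero =>
      refine ⟨D, ?_⟩
      calc (b * u) ^ 2 = b * (u * b) * u := by rw [pow_two]; noncomm_ring
        _ = b * (C * u) * u := by rw [f2]
        _ = (b * C) * (u * u) := by noncomm_ring
        _ = (D * (b ^ 2 * u)) * (u * u) := by rw [f4]
        _ = D * (b ^ 2 * (u * (u * u))) := by noncomm_ring
        _ = D * (b ^ 2 * u ^ 3) := by noncomm_ring
    | succ k ih =>
      obtain ⟨l, hl⟩ := ih
      have step2 : u ^ (2 * k + 3) * b = C * u ^ (2 * k + 3) := by
        calc u ^ (2 * k + 3) * b = u ^ (2 * (k + 1) + 1) * b := by ring_nf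
          _ = C * u ^ (2 * (k + 1) + 1) := fOdd (k + 1)
          _ = C * u ^ (2 * k + 3) := by ring_nf
      have step1 : (b * u) ^ (k + 3) = l * ((b ^ (k + 2) * C) * u ^ (2 * k + 4)) := by
        calc (b * u) ^ (k + 3) = (b * u) ^ (k + 2) * (b * u) := by rw [pow_succ]
          _ = (l * (b ^ (k + 2) * u ^ (2 * k + 3))) * (b * u) := by rw [hl]
          _ = l * (b ^ (k + 2) * ((u ^ (2 * k + 3) * b) * u)) := by noncomm_ring
          _ = l * (b ^ (k + 2) * ((C * u ^ (2 * k + 3)) * u)) := by rw [step2]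
          _ = l * ((b ^ (k + 2) * C) * (u ^ (2 * k + 3) * u)) := by noncomm_ring
          _ = l * ((b ^ (k + 2) * C) * u ^ (2 * k + 4)) := by
              rw [show u ^ (2 * k + 4) = u ^ (2 * k + 3) * u by
                rw [show 2 * k + 4 = (2 * k + 3) + 1 by omega, pow_succ]]
      rcases fA (k + 1) with h | h
      · refine ⟨l * D, ?_⟩
        calc (b * u) ^ (k + 3) = l * ((b ^ (k + 2) * C) * u ^ (2 * k + 4)) := step1
          _ = l * ((D * (b ^ (k + 3) * u)) * u ^ (2 * k + 4)) := by rw [h]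
          _ = l * D * (b ^ (k + 3) * (u * u ^ (2 * k + 4))) := by noncomm_ring
          _ = l * D * (b ^ (k + 3) * u ^ (2 * (k + 1) + 3)) := by
              rw [show u ^ (2 * (k + 1) + 3) = u * u ^ (2 * k + 4) by
                rw [show 2 * (k + 1) + 3 = (2 * k + 4) + 1 by omega, pow_succ']]
      · refine ⟨l * a, ?_⟩
        calc (b * u) ^ (k + 3) = l * ((b ^ (k + 2) * C) * u ^ (2 * k + 4)) := step1
          _ = l * ((a * (b ^ (k + 3) * u)) * u ^ (2 * k + 4)) := by rw [h]
          _ = l * a * (b ^ (k + 3) * (u * u ^ (2 * k + 4))) := by noncomm_ring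
          _ = l * a * (b ^ (k + 3) * u ^ (2 * (k + 1) + 3)) := by
              rw [show u ^ (2 * (k + 1) + 3) = u * u ^ (2 * k + 4) by
                rw [show 2 * (k + 1) + 3 = (2 * k + 4) + 1 by omega, pow_succ']]
  -- conclude
  obtain ⟨l, hl⟩ := fMain n
  have hbig : b ^ (n + 2) = 0 := by
    rw [pow_add, hbn, zero_mul]
  have hnil : IsNilpotent (b * u) := ⟨n + 2, by rw [hl, hbig, zero_mul, mul_zero]⟩
  have hunit : IsUnit (1 + b * u) := hnil.isUnit_one_add
  have : a + b = (1 + b * u) * a := by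
    rw [add_mul, one_mul, mul_assoc, hua, mul_one, add_comm]
  rw [this]
  exact hunit.mul ha
end

section
/- Let R be a ring, a ∈ R Drazin invertible with Drazin inverse x (i.e. a*x = x*a, x*a*x = x, and a - a^2*x is nilpotent), and suppose there exists c ∈ R with a*b = c*a and b*a = a*c for some b ∈ R. Then (a*x)*b = b*(a*x). -/
theorem stmt_8 {R : Type*} [Ring R] (a x b c : R)
    (h1 : a * x = x * a) (h2 : x * a * x = x) (h3 : IsNilpotent (a - a ^ 2 * x))
    (h4 : a * b = c * a) (h5 : b * a = a * c) :
    (a * x) * b = b * (a * x) := by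
  obtain ⟨k, hk⟩ := h3
  obtain ⟨e, he⟩ : ∃ e, e = a * x := ⟨_, rfl⟩
  obtain ⟨u, hu⟩ : ∃ u, u = (1 : R) - e := ⟨_, rfl⟩
  -- basic facts
  have hee : e * e = e := by
    rw [he]
    calc a * x * (a * x) = a * (x * a * x) := by noncomm_ring
      _ = a * x := by rw [h2]
  have hae : a * e = e * a := by
    rw [he]
    calc a * (a * x) = a * (x * a) := by rw [h1]
      _ = a * x * a := by noncomm_ring
  have hau : a * u = u * a := by
    rw [hu, mul_sub, sub_mul, mul_one, one_mul, hae]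
  have huu : u * u = u := by
    rw [hu, mul_sub, sub_mul, sub_mul, mul_one, one_mul, hee]
    noncomm_ring
  -- (a*u)^(m+1) = a^(m+1) * u
  have hpow : ∀ m : ℕ, (a * u) ^ (m + 1) = a ^ (m + 1) * u := by
    intro m
    induction m with
    | zero => simp
    | succ m ih =>
      rw [pow_succ, ih]
      calc a ^ (m + 1) * u * (a * u) = a ^ (m + 1) * (u * a) * u := by noncomm_ring
        _ = a ^ (m + 1) * (a * u) * u := by rw [← hau]
        _ = a ^ (m + 1) * a * (u * u) := by noncomm_ring
        _ = a ^ (m + 1) * a * u := by rw [huu]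
        _ = a ^ (m + 1 + 1) * u := by rw [pow_succ a (m + 1)]
  -- a - a^2*x = a*u
  have haeq : a - a ^ 2 * x = a * u := by
    rw [hu, he]; noncomm_ring
  have hnu : a ^ (k + 1) * u = 0 := by
    rw [← hpow, pow_succ, ← haeq, hk, zero_mul]
  have hun : u * a ^ (k + 1) = 0 := by
    have hcom : Commute u a := hau.symm
    rw [(hcom.pow_right (k + 1)).eq, hnu]
  set n := k + 1 with hn
  -- x^(m+1) * a^(m+1) = e and a^(m+1) * x^(m+1) = e
  have hxa : ∀ m : ℕ, x ^ (m + 1) * a ^ (m + 1) = e := by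
    intro m
    induction m with
    | zero => simp [he, h1]
    | succ m ih =>
      rw [pow_succ x, pow_succ a]
      calc x ^ (m + 1) * x * (a ^ (m + 1) * a)
          = x ^ (m + 1) * (x * a ^ (m + 1)) * a := by noncomm_ring
        _ = x ^ (m + 1) * (a ^ (m + 1) * x) * a := by
              rw [(Commute.pow_right (h1.symm : Commute x a) (m + 1)).eq]
        _ = (x ^ (m + 1) * a ^ (m + 1)) * (x * a) := by noncomm_ring
        _ = e * (x * a) := by rw [ih]
        _ = e * e := by rw [he, h1]
        _ = e := hee
  have hax : ∀ m : ℕ, a ^ (m + 1) * x ^ (m + 1) = e := by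
    intro m
    rw [((Commute.pow_pow (h1 : Commute a x) (m+1) (m+1))).eq, hxa m]
  -- b commutes with a^(n+n)
  have hba2 : b * (a * a) = (a * a) * b := by
    calc b * (a * a) = (b * a) * a := by noncomm_ring
      _ = (a * c) * a := by rw [h5]
      _ = a * (c * a) := by noncomm_ring
      _ = a * (a * b) := by rw [← h4]
      _ = (a * a) * b := by noncomm_ring
  have hbN : b * a ^ (n + n) = a ^ (n + n) * b := by
    have h2n : a ^ (n + n) = (a * a) ^ n := by
      rw [← sq, ← pow_mul, two_mul]
    have hc : Commute b (a * a) := hba2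
    rw [h2n, (hc.pow_right n).eq]
  -- a^(n+n) * u = 0 and u * a^(n+n) = 0
  have hNu : a ^ (n + n) * u = 0 := by
    rw [pow_add, mul_assoc, hnu, mul_zero]
  have huN : u * a ^ (n + n) = 0 := by
    rw [pow_add, ← mul_assoc, hun, zero_mul]
  -- e = x^(n+n) * a^(n+n), etc.
  have hNN : n + n = (2 * k + 1) + 1 := by omega
  have hxaN : x ^ (n + n) * a ^ (n + n) = e := by rw [hNN]; exact hxa _
  have haxN : a ^ (n + n) * x ^ (n + n) = e := by rw [hNN]; exact hax _
  -- e*b*u = 0 and u*b*e = 0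
  have h6 : e * b * u = 0 := by
    calc e * b * u = x ^ (n+n) * a ^ (n+n) * b * u := by rw [hxaN]
      _ = x ^ (n+n) * (a ^ (n+n) * b) * u := by noncomm_ring
      _ = x ^ (n+n) * (b * a ^ (n+n)) * u := by rw [← hbN]
      _ = x ^ (n+n) * b * (a ^ (n+n) * u) := by noncomm_ring
      _ = 0 := by rw [hNu, mul_zero]
  have h7 : u * b * e = 0 := by
    calc u * b * e = u * b * (a ^ (n+n) * x ^ (n+n)) := by rw [haxN]
      _ = u * (b * a ^ (n+n)) * x ^ (n+n) := by noncomm_ring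
      _ = u * (a ^ (n+n) * b) * x ^ (n+n) := by rw [hbN]
      _ = (u * a ^ (n+n)) * b * x ^ (n+n) := by noncomm_ring
      _ = 0 := by rw [huN, zero_mul, zero_mul]
  have h8 : e * b = e * b * e := by
    have h' : e * b * u = e * b - e * b * e := by rw [hu]; noncomm_ring
    rw [h'] at h6
    linear_combination (norm := noncomm_ring) h6
  have h9 : b * e = e * b * e := by
    have h' : u * b * e = b * e - e * b * e := by rw [hu]; noncomm_ring
    rw [h'] at h7
    linear_combination (norm := noncomm_ring) h7
  rw [← he, h8, h9]
end

section
/- Let R be a ring, a ∈ R with Drazin inverse x (a*x = x*a, x*a*x = x, a - a^2*x nilpotent), and b, c ∈ R with a*b = c*a and b*a = a*c. Then x*b = c*x. -/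
theorem stmt_9 {R : Type*} [Ring R] (a x b c : R)
    (h1 : a * x = x * a) (h2 : x * a * x = x) (h3 : IsNilpotent (a - a ^ 2 * x))
    (h4 : a * b = c * a) (h5 : b * a = a * c) :
    x * b = c * x := by
  obtain ⟨k, hk⟩ := h3
  rcases Nat.eq_zero_or_pos k with hk0 | hkpos
  · subst hk0
    simp only [pow_zero] at hk
    have : Subsingleton R := subsingleton_of_zero_eq_one hk.symm
    exact Subsingleton.elim _ _
  obtain ⟨j, rfl⟩ := Nat.exists_eq_succ_of_ne_zero hkpos.ne'
  have C : Commute a x := h1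
  -- a*x is idempotent
  have hidem : IsIdempotentElem (a * x) := by
    show a * x * (a * x) = a * x
    rw [mul_assoc, ← mul_assoc x a x, h2]
  have hidem' : IsIdempotentElem (1 - a * x) := hidem.one_sub
  -- a commutes with 1 - a*x
  have hcp : Commute a (1 - a * x) :=
    (Commute.one_right a).sub_right ((Commute.refl a).mul_right C)
  -- a^(j+1) * (1 - a*x) = 0
  have hkp : a ^ (j + 1) * (1 - a * x) = 0 := by
    have hfac : a - a ^ 2 * x = a * (1 - a * x) := by noncomm_ring
    have := hk
    rw [hfac, hcp.mul_pow, hidem'.pow_succ_eq] at this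
    exact this
  set m := 2 * (j + 1) with hm
  -- a^m * (1 - a*x) = 0
  have hmp : a ^ m * (1 - a * x) = 0 := by
    rw [hm, two_mul, pow_add, mul_assoc, hkp, mul_zero]
  -- b commutes with a^2
  have ha2b : Commute (a ^ 2) b := by
    show a ^ 2 * b = b * a ^ 2
    calc a ^ 2 * b = a * (a * b) := by rw [sq, mul_assoc]
    _ = a * (c * a) := by rw [h4]
    _ = (a * c) * a := by rw [mul_assoc]
    _ = (b * a) * a := by rw [h5]
    _ = b * a ^ 2 := by rw [sq, mul_assoc]
  have hamb : a ^ m * b = b * a ^ m := by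
    rw [hm, pow_mul]
    exact (ha2b.pow_left (j + 1)).eq
  -- c commutes with a^2
  have ha2c : Commute (a ^ 2) c := by
    show a ^ 2 * c = c * a ^ 2
    calc a ^ 2 * c = a * (a * c) := by rw [sq, mul_assoc]
    _ = a * (b * a) := by rw [h5]
    _ = (a * b) * a := by rw [mul_assoc]
    _ = (c * a) * a := by rw [h4]
    _ = c * a ^ 2 := by rw [sq, mul_assoc]
  have hamc : a ^ m * c = c * a ^ m := by
    rw [hm, pow_mul]
    exact (ha2c.pow_left (j + 1)).eq
  -- x * (a*x)^n = x
  have hxe : x * (a * x) = x := by rw [← mul_assoc, h2]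
  have hxpow : ∀ n : ℕ, x * (a * x) ^ n = x := by
    intro n
    induction n with
    | zero => simp
    | succ n ih => rw [pow_succ, ← mul_assoc, ih, hxe]
  -- x = a^m * x^(m+1) and x = x^(m+1) * a^m
  have hx1 : x = a ^ m * x ^ (m + 1) := by
    have h := hxpow m
    rw [C.mul_pow] at h
    calc x = x * (a ^ m * x ^ m) := h.symm
    _ = (x * a ^ m) * x ^ m := by rw [mul_assoc]
    _ = (a ^ m * x) * x ^ m := by rw [(C.pow_left m).eq]
    _ = a ^ m * (x * x ^ m) := by rw [mul_assoc]
    _ = a ^ m * x ^ (m + 1) := by rw [← pow_succ']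
  have hx2 : x = x ^ (m + 1) * a ^ m := by
    rw [← (C.pow_pow m (m + 1)).eq]
    exact hx1
  -- x * b * (1 - a*x) = 0
  have h6 : x * b * (1 - a * x) = 0 := by
    calc x * b * (1 - a * x) = (x ^ (m + 1) * a ^ m) * b * (1 - a * x) := by rw [← hx2]
    _ = x ^ (m + 1) * (a ^ m * b) * (1 - a * x) := by rw [mul_assoc (x ^ (m+1))]
    _ = x ^ (m + 1) * (b * a ^ m) * (1 - a * x) := by rw [hamb]
    _ = x ^ (m + 1) * b * (a ^ m * (1 - a * x)) := by
        rw [← mul_assoc, mul_assoc (x ^ (m+1) * b)]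
    _ = 0 := by rw [hmp, mul_zero]
  -- (1 - a*x) * (c * x) = 0
  have h7 : (1 - a * x) * (c * x) = 0 := by
    calc (1 - a * x) * (c * x) = (1 - a * x) * (c * (a ^ m * x ^ (m + 1))) := by rw [← hx1]
    _ = (1 - a * x) * ((c * a ^ m) * x ^ (m + 1)) := by rw [mul_assoc]
    _ = (1 - a * x) * ((a ^ m * c) * x ^ (m + 1)) := by rw [hamc]
    _ = ((1 - a * x) * a ^ m) * (c * x ^ (m + 1)) := by rw [← mul_assoc, ← mul_assoc, mul_assoc ((1 - a*x) * a ^ m)]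
    _ = (a ^ m * (1 - a * x)) * (c * x ^ (m + 1)) := by rw [(hcp.pow_left m).symm.eq]
    _ = 0 := by rw [hmp, zero_mul]
  -- x * b * (a * x) = (a * x) * (c * x)
  have h8 : x * b * (a * x) = (a * x) * (c * x) := by
    calc x * b * (a * x) = x * ((b * a) * x) := by rw [mul_assoc, ← mul_assoc b a x]
    _ = x * ((a * c) * x) := by rw [h5]
    _ = (x * a) * (c * x) := by rw [mul_assoc a c x, ← mul_assoc]
    _ = (a * x) * (c * x) := by rw [← h1]
  have e1 : x * b = x * b * (a * x) := by
    have h := h6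
    rw [mul_sub, mul_one, sub_eq_zero] at h
    exact h
  have e2 : c * x = (a * x) * (c * x) := by
    have h := h7
    rw [sub_mul, one_mul, sub_eq_zero] at h
    exact h
  rw [e1, h8, ← e2]
end

section
/- Let R be a ring, a ∈ R with Drazin inverse x (a*x = x*a, x*a*x = x, a - a^2*x nilpotent), and b, c ∈ R with a*b = c*a and b*a = a*c. Then x*c = b*x and (a*x)*c = c*(a*x). -/
theorem stmt_10 {R : Type*} [Ring R] (a x b c : R)
    (h1 : a * x = x * a) (h2 : x * a * x = x) (h3 : IsNilpotent (a - a ^ 2 * x))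
    (h4 : a * b = c * a) (h5 : b * a = a * c) :
    x * c = b * x ∧ (a * x) * c = c * (a * x) := by
  obtain ⟨k, hk⟩ := h3
  -- basic facts about e = a*x
  have he : (a * x) * (a * x) = a * x := by
    rw [mul_assoc, ← mul_assoc x a x, h2]
  have hxe : x * (a * x) = x := by rw [← mul_assoc, h2]
  have cax : Commute a x := h1
  -- powers of a*x
  have hepow : ∀ m : ℕ, (a * x) ^ (m + 1) = a * x := by
    intro m
    induction m with
    | zero => simp
    | succ p ih => rw [pow_succ, ih, he]
  -- x^(n+1) * a^n = x
  have hF1 : ∀ m : ℕ, x ^ (m + 1) * a ^ m = x := by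
    intro m
    rw [pow_succ', mul_assoc, ← (cax.symm).mul_pow, ← h1]
    cases m with
    | zero => simp
    | succ p => rw [hepow, hxe]
  -- a^n * x^(n+1) = x
  have hF2 : ∀ m : ℕ, a ^ m * x ^ (m + 1) = x := by
    intro m
    rw [pow_succ, ← mul_assoc, ← cax.mul_pow]
    cases m with
    | zero => simp
    | succ p => rw [hepow, h1, h2]
  -- x^(n+1) * a^(n+1) = a*x
  have hF3 : ∀ m : ℕ, x ^ (m + 1) * a ^ (m + 1) = a * x := by
    intro m
    rw [← (cax.symm).mul_pow, ← h1, hepow]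
  -- a^(n+1) * x^(n+1) = a*x
  have hF4 : ∀ m : ℕ, a ^ (m + 1) * x ^ (m + 1) = a * x := by
    intro m
    rw [← cax.mul_pow, hepow]
  -- nilpotency: a^(k+1) * (1 - a*x) = 0
  have hsplit : a - a ^ 2 * x = a * (1 - a * x) := by noncomm_ring
  have hcaf : Commute a (1 - a * x) := by
    refine (Commute.one_right a).sub_right ?_
    show a * (a * x) = (a * x) * a
    rw [h1, ← mul_assoc, ← h1]
  have hfidem : IsIdempotentElem (1 - a * x) := (IsIdempotentElem.one_sub (he))
  have hnil : a ^ (k + 1) * (1 - a * x) = 0 := by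
    have h0 : (a - a ^ 2 * x) ^ (k + 1) = 0 := by rw [pow_succ, hk, zero_mul]
    rw [hsplit, hcaf.mul_pow, hfidem.pow_succ_eq] at h0
    exact h0
  set n : ℕ := 2 * (k + 1) with hn
  have hnk : n = (k + 1) + (k + 1) := by omega
  have hK2 : a ^ n = a ^ (n + 1) * x := by
    have h0 : a ^ n * (1 - a * x) = 0 := by
      rw [hnk, pow_add, mul_assoc, hnil, mul_zero]
    have h0' : a ^ n - a ^ n * (a * x) = 0 := by rw [mul_sub, mul_one] at h0; exact h0
    have h1' : a ^ n = a ^ n * (a * x) := sub_eq_zero.mp h0'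
    rw [h1', ← mul_assoc, ← pow_succ]
  -- even powers commute with b and c
  have hab2 : Commute (a ^ 2) b := by
    show a ^ 2 * b = b * a ^ 2
    rw [sq, mul_assoc, h4, ← mul_assoc, ← h5, mul_assoc]
  have hac2 : Commute (a ^ 2) c := by
    show a ^ 2 * c = c * a ^ 2
    rw [sq, mul_assoc, ← h5, ← mul_assoc, h4, mul_assoc]
  have hbn : a ^ n * b = b * a ^ n := by
    have := (hab2.pow_left (k + 1))
    rwa [← pow_mul] at this
  have hcn : a ^ n * c = c * a ^ n := by
    have := (hac2.pow_left (k + 1))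
    rwa [← pow_mul] at this
  -- x commutes with powers of a
  have hxan : ∀ m : ℕ, a ^ m * x = x * a ^ m := fun m => (cax.pow_left m)
  -- Claim A : x*c = (a*x)*(b*x)
  have claimA : x * c = (a * x) * (b * x) := by
    have s1 : x * c = x ^ (n + 1) * (a ^ n * c) := by rw [← mul_assoc, hF1]
    have s2 : c * a ^ (n + 1) = a ^ (n + 1) * b := by
      rw [pow_succ, ← mul_assoc, ← hcn, mul_assoc, ← h4, ← mul_assoc]
    calc x * c = x ^ (n + 1) * (a ^ n * c) := s1
      _ = x ^ (n + 1) * (c * a ^ n) := by rw [hcn]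
      _ = x ^ (n + 1) * (c * (a ^ (n + 1) * x)) := by rw [← hK2]
      _ = x ^ (n + 1) * ((c * a ^ (n + 1)) * x) := by rw [mul_assoc]
      _ = x ^ (n + 1) * ((a ^ (n + 1) * b) * x) := by rw [s2]
      _ = (x ^ (n + 1) * a ^ (n + 1)) * (b * x) := by
          simp only [mul_assoc]
      _ = (a * x) * (b * x) := by rw [hF3]
  -- Claim B : b*x = (x*c)*(a*x)
  have claimB : b * x = (x * c) * (a * x) := by
    have s3 : a ^ n * b = x * (c * a ^ (n + 1)) := by
      have hxan1 : a ^ n = x * a ^ (n + 1) := by rw [hK2, ← hxan]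
      calc a ^ n * b = (x * a ^ (n + 1)) * b := by rw [← hxan1]
        _ = x * (a ^ (n + 1) * b) := by rw [mul_assoc]
        _ = x * ((a ^ n * a) * b) := by rw [pow_succ]
        _ = x * (a ^ n * (a * b)) := by rw [mul_assoc]
        _ = x * (a ^ n * (c * a)) := by rw [h4]
        _ = x * ((a ^ n * c) * a) := by rw [← mul_assoc (a ^ n) c a]
        _ = x * ((c * a ^ n) * a) := by rw [hcn]
        _ = x * (c * (a ^ n * a)) := by rw [mul_assoc]
        _ = x * (c * a ^ (n + 1)) := by rw [← pow_succ]
    calc b * x = b * (a ^ n * x ^ (n + 1)) := by rw [hF2]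
      _ = (b * a ^ n) * x ^ (n + 1) := by rw [mul_assoc]
      _ = (a ^ n * b) * x ^ (n + 1) := by rw [hbn]
      _ = (x * (c * a ^ (n + 1))) * x ^ (n + 1) := by rw [s3]
      _ = (x * c) * (a ^ (n + 1) * x ^ (n + 1)) := by
          simp only [mul_assoc]
      _ = (x * c) * (a * x) := by rw [hF4]
  -- combine
  have hmain : x * c = b * x := by
    have step : (a * x) * (x * c) = x * c := by
      rw [claimA, ← mul_assoc, he]
    calc x * c = (a * x) * (b * x) := claimA
      _ = (a * x) * ((x * c) * (a * x)) := by rw [← claimB]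
      _ = ((a * x) * (x * c)) * (a * x) := by simp only [mul_assoc]
      _ = (x * c) * (a * x) := by rw [step]
      _ = b * x := claimB.symm
  refine ⟨hmain, ?_⟩
  calc (a * x) * c = a * (x * c) := by rw [mul_assoc]
    _ = a * (b * x) := by rw [hmain]
    _ = (a * b) * x := by rw [mul_assoc]
    _ = (c * a) * x := by rw [h4]
    _ = c * (a * x) := by rw [mul_assoc]
end

section
/- Let R be a ring and a, b ∈ R with Drazin inverses x and y respectively. If a, b are {a,b}-weakly commutative (there exist c₁, c₂ with a*b = c₁*a, b*a = a*c₁, a*b = b*c₂, b*a = c₂*b), then y*x is a Drazin inverse of a*b, i.e. (a*b)*(y*x) = (y*x)*(a*b), (y*x)*(a*b)*(y*x) = y*x, and a*b - (a*b)^2*(y*x) is nilpotent. -/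
section aux
variable {R : Type*} [Ring R]

private lemma idem_pow' {e : R} (he : e * e = e) (n : ℕ) : e ^ (n + 1) = e := by
  induction n with
  | zero => simp
  | succ k ih => rw [pow_succ, ih, he]

private lemma e_idem' {a x : R} (hx2 : x * a * x = x) :
    (a * x) * (a * x) = a * x := by
  calc (a * x) * (a * x) = a * (x * a * x) := by noncomm_ring
    _ = a * x := by rw [hx2]

private lemma ae_comm' {a x : R} (hx1 : a * x = x * a) :
    a * (a * x) = (a * x) * a := by
  calc a * (a * x) = a * (x * a) := by rw [hx1]
    _ = (a * x) * a := by noncomm_ring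

private lemma drazin_absorb' {a x : R} (hx1 : a * x = x * a) (hx2 : x * a * x = x)
    {n N : ℕ} (hn : (a - a ^ 2 * x) ^ n = 0) (hn1 : 1 ≤ n) (hnN : n ≤ N) :
    a ^ N * (a * x) = a ^ N := by
  have hkey : a - a ^ 2 * x = a * (1 - a * x) := by noncomm_ring
  have hc : Commute a (1 - a * x) :=
    (Commute.one_right a).sub_right (ae_comm' hx1)
  have hidem : (1 - a * x) * (1 - a * x) = 1 - a * x := by
    have := e_idem' (a := a) hx2
    noncomm_ring [this]
  have h1 : a ^ n * (1 - a * x) = 0 := by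
    have hmp : (a * (1 - a * x)) ^ n = a ^ n * (1 - a * x) ^ n := hc.mul_pow n
    rw [← hkey, hn] at hmp
    obtain ⟨k, rfl⟩ := Nat.exists_eq_add_of_le hn1
    rw [add_comm 1 k] at hmp
    rw [idem_pow' hidem] at hmp
    rw [add_comm 1 k]
    exact hmp.symm
  have h2 : a ^ N * (1 - a * x) = 0 := by
    obtain ⟨k, rfl⟩ := Nat.exists_eq_add_of_le hnN
    calc a ^ (n + k) * (1 - a * x) = a ^ k * (a ^ n * (1 - a * x)) := by
          rw [add_comm n k, pow_add, mul_assoc]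
      _ = 0 := by rw [h1, mul_zero]
  have h3 : a ^ N * (a * x) - a ^ N = 0 := by
    calc a ^ N * (a * x) - a ^ N = -(a ^ N * (1 - a * x)) := by noncomm_ring
      _ = 0 := by rw [h2, neg_zero]
  exact sub_eq_zero.mp h3

private lemma comm_e' {a x u : R} (hx1 : a * x = x * a) (hx2 : x * a * x = x)
    {N : ℕ} (habs : a ^ N * (a * x) = a ^ N) (hN : 1 ≤ N)
    (hu : u * a ^ N = a ^ N * u) :
    u * (a * x) = (a * x) * u := by
  have hcx : Commute a x := hx1
  have heN1 : (a * x) ^ N = a ^ N * x ^ N := hcx.mul_pow N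
  have heN2 : (a * x) ^ N = x ^ N * a ^ N := by
    rw [hx1]; exact hcx.symm.mul_pow N
  have hee : (a * x) ^ N = a * x := by
    obtain ⟨k, rfl⟩ := Nat.exists_eq_add_of_le hN
    rw [add_comm 1 k]; exact idem_pow' (e_idem' hx2) k
  have haNe : a ^ N * (a * x) = (a * x) * a ^ N := by
    have h : Commute (a * x) a := (ae_comm' hx1).symm
    exact (h.pow_right N).symm.eq
  have c1 : (1 - a * x) * (u * (a * x)) = 0 := by
    have step : (1 - a * x) * (u * (a * x)) = ((1 - a * x) * a ^ N) * (u * x ^ N) := by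
      calc (1 - a * x) * (u * (a * x)) = (1 - a * x) * (u * (a ^ N * x ^ N)) := by
            rw [← heN1, hee]
        _ = (1 - a * x) * ((u * a ^ N) * x ^ N) := by noncomm_ring
        _ = (1 - a * x) * ((a ^ N * u) * x ^ N) := by rw [hu]
        _ = ((1 - a * x) * a ^ N) * (u * x ^ N) := by noncomm_ring
    rw [step]
    have hz : (1 - a * x) * a ^ N = 0 := by
      calc (1 - a * x) * a ^ N = a ^ N - (a * x) * a ^ N := by noncomm_ring
        _ = a ^ N - a ^ N * (a * x) := by rw [haNe]
        _ = 0 := by rw [habs, sub_self]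
    rw [hz, zero_mul]
  have c2 : ((a * x) * u) * (1 - a * x) = 0 := by
    have step : ((a * x) * u) * (1 - a * x) = (x ^ N * u) * (a ^ N * (1 - a * x)) := by
      calc ((a * x) * u) * (1 - a * x) = ((x ^ N * a ^ N) * u) * (1 - a * x) := by
            rw [← heN2, hee]
        _ = (x ^ N * (a ^ N * u)) * (1 - a * x) := by noncomm_ring
        _ = (x ^ N * (u * a ^ N)) * (1 - a * x) := by rw [hu]
        _ = (x ^ N * u) * (a ^ N * (1 - a * x)) := by noncomm_ring
    rw [step]
    have hz : a ^ N * (1 - a * x) = 0 := by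
      calc a ^ N * (1 - a * x) = a ^ N - a ^ N * (a * x) := by noncomm_ring
        _ = 0 := by rw [habs, sub_self]
    rw [hz, mul_zero]
  have e1 : u * (a * x) = (a * x) * (u * (a * x)) := by
    have h : (a * x) * (u * (a * x)) - u * (a * x) = 0 := by
      calc (a * x) * (u * (a * x)) - u * (a * x)
          = -((1 - a * x) * (u * (a * x))) := by noncomm_ring
        _ = 0 := by rw [c1, neg_zero]
    exact (sub_eq_zero.mp h).symm
  have e2 : ((a * x) * u) * (a * x) = (a * x) * u := by
    have h : ((a * x) * u) * (a * x) - (a * x) * u = 0 := by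
      calc ((a * x) * u) * (a * x) - (a * x) * u
          = ((a * x) * u) * (a * x) - ((a * x) * u) * 1 := by rw [mul_one]
        _ = -(((a * x) * u) * (1 - a * x)) := by noncomm_ring
        _ = 0 := by rw [c2, neg_zero]
    exact sub_eq_zero.mp h
  calc u * (a * x) = (a * x) * (u * (a * x)) := e1
    _ = ((a * x) * u) * (a * x) := by noncomm_ring
    _ = (a * x) * u := e2

private lemma comm_drazin' {a x u : R} (hx1 : a * x = x * a) (hx2 : x * a * x = x)
    {N : ℕ} (habs : a ^ N * (a * x) = a ^ N) (hN : 1 ≤ N)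
    (hu : u * a = a * u) : u * x = x * u := by
  have hcu : Commute u a := hu
  have huN : u * a ^ N = a ^ N * u := (hcu.pow_right N).eq
  have hue : u * (a * x) = (a * x) * u := comm_e' hx1 hx2 habs hN huN
  have hex : (a * x) * x = x := by
    calc (a * x) * x = (x * a) * x := by rw [hx1]
      _ = x := hx2
  have hxe : x * (a * x) = x := by
    calc x * (a * x) = (x * a) * x := by noncomm_ring
      _ = x := hx2
  have hee : (a * x) * (a * x) = a * x := e_idem' hx2
  have hae : a * (a * x) = (a * x) * a := ae_comm' hx1
  have hst : (a * (a * x) + (1 - a * x)) * (x + (1 - a * x)) = 1 := by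
    have k1 : (a * (a * x)) * x = a * x := by
      rw [mul_assoc, hex]
    have k2 : (a * (a * x)) * (1 - a * x) = 0 := by
      calc (a * (a * x)) * (1 - a * x) = a * (a * x) - a * ((a * x) * (a * x)) := by noncomm_ring
        _ = 0 := by rw [hee, sub_self]
    have k3 : (1 - a * x) * x = 0 := by
      calc (1 - a * x) * x = x - (a * x) * x := by noncomm_ring
        _ = 0 := by rw [hex, sub_self]
    have k4 : (1 - a * x) * (1 - a * x) = 1 - a * x := by
      noncomm_ring [hee]
    calc (a * (a * x) + (1 - a * x)) * (x + (1 - a * x))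
        = (a * (a * x)) * x + (a * (a * x)) * (1 - a * x)
          + ((1 - a * x) * x + (1 - a * x) * (1 - a * x)) := by noncomm_ring
      _ = a * x + 0 + (0 + (1 - a * x)) := by rw [k1, k2, k3, k4]
      _ = 1 := by noncomm_ring
  have hts : (x + (1 - a * x)) * (a * (a * x) + (1 - a * x)) = 1 := by
    have k1 : x * (a * (a * x)) = a * x := by
      calc x * (a * (a * x)) = (x * a) * (a * x) := by noncomm_ring
        _ = (a * x) * (a * x) := by rw [← hx1]
        _ = a * x := hee
    have k2 : x * (1 - a * x) = 0 := by
      calc x * (1 - a * x) = x - x * (a * x) := by noncomm_ring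
        _ = 0 := by rw [hxe, sub_self]
    have k3 : (1 - a * x) * (a * (a * x)) = 0 := by
      calc (1 - a * x) * (a * (a * x))
          = a * (a * x) - (a * x) * (a * (a * x)) := by noncomm_ring
        _ = a * (a * x) - ((a * x) * a) * (a * x) := by noncomm_ring
        _ = a * (a * x) - (a * (a * x)) * (a * x) := by rw [← hae]
        _ = a * (a * x) - a * ((a * x) * (a * x)) := by noncomm_ring
        _ = 0 := by rw [hee, sub_self]
    have k4 : (1 - a * x) * (1 - a * x) = 1 - a * x := by
      noncomm_ring [hee]
    calc (x + (1 - a * x)) * (a * (a * x) + (1 - a * x))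
        = x * (a * (a * x)) + x * (1 - a * x)
          + ((1 - a * x) * (a * (a * x)) + (1 - a * x) * (1 - a * x)) := by noncomm_ring
      _ = a * x + 0 + (0 + (1 - a * x)) := by rw [k1, k2, k3, k4]
      _ = 1 := by noncomm_ring
  have hus : u * (a * (a * x) + (1 - a * x)) = (a * (a * x) + (1 - a * x)) * u := by
    calc u * (a * (a * x) + (1 - a * x))
        = (u * a) * (a * x) + u - u * (a * x) := by noncomm_ring
      _ = (a * u) * (a * x) + u - (a * x) * u := by rw [hu, hue]
      _ = a * (u * (a * x)) + u - (a * x) * u := by noncomm_ring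
      _ = a * ((a * x) * u) + u - (a * x) * u := by rw [hue]
      _ = (a * (a * x) + (1 - a * x)) * u := by noncomm_ring
  have hut : u * (x + (1 - a * x)) = (x + (1 - a * x)) * u := by
    calc u * (x + (1 - a * x))
        = ((x + (1 - a * x)) * (a * (a * x) + (1 - a * x))) * (u * (x + (1 - a * x))) := by
          rw [hts, one_mul]
      _ = (x + (1 - a * x)) * (((a * (a * x) + (1 - a * x))) * u) * (x + (1 - a * x)) := by
          noncomm_ring
      _ = (x + (1 - a * x)) * (u * ((a * (a * x) + (1 - a * x)))) * (x + (1 - a * x)) := by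
          rw [hus]
      _ = ((x + (1 - a * x)) * u) * (((a * (a * x) + (1 - a * x))) * (x + (1 - a * x))) := by
          noncomm_ring
      _ = (x + (1 - a * x)) * u := by rw [hst, mul_one]
  have hxet : (a * x) * (x + (1 - a * x)) = x := by
    calc (a * x) * (x + (1 - a * x))
        = (a * x) * x + (a * x - (a * x) * (a * x)) := by noncomm_ring
      _ = x + (a * x - a * x) := by rw [hex, hee]
      _ = x := by noncomm_ring
  calc u * x = u * ((a * x) * (x + (1 - a * x))) := by rw [hxet]
    _ = (u * (a * x)) * (x + (1 - a * x)) := by noncomm_ring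
    _ = ((a * x) * u) * (x + (1 - a * x)) := by rw [hue]
    _ = (a * x) * (u * (x + (1 - a * x))) := by noncomm_ring
    _ = (a * x) * ((x + (1 - a * x)) * u) := by rw [hut]
    _ = ((a * x) * (x + (1 - a * x))) * u := by noncomm_ring
    _ = x * u := by rw [hxet]

end aux

theorem stmt_11 {R : Type*} [Ring R] (a b x y c₁ c₂ : R)
    (hx1 : a * x = x * a) (hx2 : x * a * x = x) (hx3 : IsNilpotent (a - a ^ 2 * x))
    (hy1 : b * y = y * b) (hy2 : y * b * y = y) (hy3 : IsNilpotent (b - b ^ 2 * y))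
    (h1 : a * b = c₁ * a) (h2 : b * a = a * c₁)
    (h3 : a * b = b * c₂) (h4 : b * a = c₂ * b) :
    (a * b) * (y * x) = (y * x) * (a * b) ∧
    (y * x) * (a * b) * (y * x) = y * x ∧
    IsNilpotent (a * b - (a * b) ^ 2 * (y * x)) := by
  obtain ⟨n₀, hn₀⟩ := hx3
  obtain ⟨m₀, hm₀⟩ := hy3
  have hn : (a - a ^ 2 * x) ^ (n₀ + 1) = 0 := by rw [pow_succ, hn₀, zero_mul]
  have hm : (b - b ^ 2 * y) ^ (m₀ + 1) = 0 := by rw [pow_succ, hm₀, zero_mul]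
  set K := n₀ + m₀ + 2 with hK_def
  set N := 2 * K with hN_def
  have hN1 : 1 ≤ N := by omega
  have habs_a : a ^ N * (a * x) = a ^ N :=
    drazin_absorb' hx1 hx2 hn (by omega) (by omega)
  have habs_b : b ^ N * (b * y) = b ^ N :=
    drazin_absorb' hy1 hy2 hm (by omega) (by omega)
  -- basic commutation facts
  have F4 : a ^ 2 * b = b * a ^ 2 := by
    calc a ^ 2 * b = a * (a * b) := by noncomm_ring
      _ = a * (c₁ * a) := by rw [h1]
      _ = (a * c₁) * a := by noncomm_ring
      _ = (b * a) * a := by rw [← h2]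
      _ = b * a ^ 2 := by noncomm_ring
  have F5 : a * b ^ 2 = b ^ 2 * a := by
    calc a * b ^ 2 = (a * b) * b := by noncomm_ring
      _ = (b * c₂) * b := by rw [h3]
      _ = b * (c₂ * b) := by noncomm_ring
      _ = b * (b * a) := by rw [← h4]
      _ = b ^ 2 * a := by noncomm_ring
  -- double commutant facts
  have C1 : b ^ 2 * x = x * b ^ 2 :=
    comm_drazin' hx1 hx2 habs_a hN1 F5.symm
  have C2 : a ^ 2 * y = y * a ^ 2 :=
    comm_drazin' hy1 hy2 habs_b hN1 F4
  have pow2N : ∀ z : R, z ^ N = (z ^ 2) ^ K := fun z => by rw [← pow_mul]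
  have hyaN : y * a ^ N = a ^ N * y := by
    have h : Commute y (a ^ 2) := C2.symm
    rw [pow2N a]; exact (h.pow_right K).eq
  have C3 : y * (a * x) = (a * x) * y := comm_e' hx1 hx2 habs_a hN1 hyaN
  have hxbN : x * b ^ N = b ^ N * x := by
    have h : Commute x (b ^ 2) := C1.symm
    rw [pow2N b]; exact (h.pow_right K).eq
  have C4 : x * (b * y) = (b * y) * x := comm_e' hy1 hy2 habs_b hN1 hxbN
  -- (ab)^2 formulas
  have hab2L : (a * b) * (a * b) = (c₁ * b) * a ^ 2 := by
    calc (a * b) * (a * b) = (c₁ * a) * (a * b) := by rw [← h1]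
      _ = c₁ * (a * (a * b)) := by noncomm_ring
      _ = c₁ * (a * (c₁ * a)) := by rw [h1]
      _ = c₁ * ((a * c₁) * a) := by noncomm_ring
      _ = c₁ * ((b * a) * a) := by rw [← h2]
      _ = (c₁ * b) * a ^ 2 := by noncomm_ring
  have hab2R : (a * b) * (a * b) = b ^ 2 * (a * c₂) := by
    calc (a * b) * (a * b) = (b * c₂) * (b * c₂) := by rw [← h3]
      _ = b * ((c₂ * b) * c₂) := by noncomm_ring
      _ = b * ((b * a) * c₂) := by rw [← h4]
      _ = b ^ 2 * (a * c₂) := by noncomm_ring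
  -- c₁*b commutes with a^2 ;  a*c₂ commutes with b^2
  have hc1b : (c₁ * b) * a ^ 2 = a ^ 2 * (c₁ * b) := by
    calc (c₁ * b) * a ^ 2 = (a * b) * (a * b) := hab2L.symm
      _ = a * ((b * a) * b) := by noncomm_ring
      _ = a * ((a * c₁) * b) := by rw [h2]
      _ = a ^ 2 * (c₁ * b) := by noncomm_ring
  have hac2 : (a * c₂) * b ^ 2 = b ^ 2 * (a * c₂) := by
    calc (a * c₂) * b ^ 2 = a * ((c₂ * b) * b) := by noncomm_ring
      _ = a * ((b * a) * b) := by rw [← h4]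
      _ = (a * b) * (a * b) := by noncomm_ring
      _ = b ^ 2 * (a * c₂) := hab2R
  have hc1bN : (c₁ * b) * a ^ N = a ^ N * (c₁ * b) := by
    have h : Commute (c₁ * b) (a ^ 2) := hc1b
    rw [pow2N a]; exact (h.pow_right K).eq
  have C5 : (c₁ * b) * (a * x) = (a * x) * (c₁ * b) :=
    comm_e' hx1 hx2 habs_a hN1 hc1bN
  -- product formulas
  have P1 : ∀ k : ℕ, (a * b) ^ (2 * k) = (c₁ * b) ^ k * a ^ (2 * k) := by
    intro k
    induction k with
    | zero => simp
    | succ j ih =>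
      have hcomm : a ^ (2 * j) * (c₁ * b) = (c₁ * b) * a ^ (2 * j) := by
        have h : Commute (c₁ * b) (a ^ 2) := hc1b
        rw [pow_mul]
        exact ((h.pow_right j).eq).symm
      calc (a * b) ^ (2 * (j + 1)) = (a * b) ^ (2 * j) * ((a * b) * (a * b)) := by
            rw [show 2 * (j + 1) = 2 * j + 2 by ring, pow_add, pow_two]
        _ = ((c₁ * b) ^ j * a ^ (2 * j)) * ((c₁ * b) * a ^ 2) := by rw [ih, hab2L]
        _ = (c₁ * b) ^ j * ((a ^ (2 * j) * (c₁ * b)) * a ^ 2) := by noncomm_ring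
        _ = (c₁ * b) ^ j * (((c₁ * b) * a ^ (2 * j)) * a ^ 2) := by rw [hcomm]
        _ = ((c₁ * b) ^ j * (c₁ * b)) * (a ^ (2 * j) * a ^ 2) := by noncomm_ring
        _ = (c₁ * b) ^ (j + 1) * a ^ (2 * (j + 1)) := by
            rw [← pow_succ, ← pow_add, show 2 * j + 2 = 2 * (j + 1) by ring]
  have P2 : ∀ k : ℕ, (a * b) ^ (2 * k) = b ^ (2 * k) * (a * c₂) ^ k := by
    intro k
    induction k with
    | zero => simp
    | succ j ih =>
      have hcomm : (a * c₂) * b ^ (2 * j) = b ^ (2 * j) * (a * c₂) := by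
        have h : Commute (a * c₂) (b ^ 2) := hac2
        rw [pow_mul]
        exact (h.pow_right j).eq
      calc (a * b) ^ (2 * (j + 1)) = ((a * b) * (a * b)) * (a * b) ^ (2 * j) := by
            rw [show 2 * (j + 1) = 2 + 2 * j by ring, pow_add, pow_two]
        _ = (b ^ 2 * (a * c₂)) * (b ^ (2 * j) * (a * c₂) ^ j) := by rw [ih, hab2R]
        _ = b ^ 2 * (((a * c₂) * b ^ (2 * j)) * (a * c₂) ^ j) := by noncomm_ring
        _ = b ^ 2 * ((b ^ (2 * j) * (a * c₂)) * (a * c₂) ^ j) := by rw [hcomm]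
        _ = (b ^ 2 * b ^ (2 * j)) * ((a * c₂) * (a * c₂) ^ j) := by noncomm_ring
        _ = b ^ (2 * (j + 1)) * (a * c₂) ^ (j + 1) := by
            rw [← pow_add, ← pow_succ', show 2 + 2 * j = 2 * (j + 1) by ring]
  -- absorption at level N for (a*b)^N
  have haNx : (a * b) ^ N * (a * x) = (a * b) ^ N := by
    rw [hN_def, P1 K]
    calc (c₁ * b) ^ K * a ^ (2 * K) * (a * x)
        = (c₁ * b) ^ K * (a ^ (2 * K) * (a * x)) := by noncomm_ring
      _ = (c₁ * b) ^ K * a ^ (2 * K) := by rw [← hN_def, habs_a]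
  have heaN : (a * x) * (a * b) ^ N = (a * b) ^ N := by
    rw [hN_def, P1 K]
    have hc5K : (a * x) * (c₁ * b) ^ K = (c₁ * b) ^ K * (a * x) := by
      have h : Commute (a * x) (c₁ * b) := C5.symm
      exact (h.pow_right K).eq
    have haK : (a * x) * a ^ (2 * K) = a ^ (2 * K) * (a * x) := by
      have h : Commute (a * x) a := (ae_comm' hx1).symm
      exact (h.pow_right (2 * K)).eq
    calc (a * x) * ((c₁ * b) ^ K * a ^ (2 * K))
        = ((a * x) * (c₁ * b) ^ K) * a ^ (2 * K) := by noncomm_ring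
      _ = (c₁ * b) ^ K * ((a * x) * a ^ (2 * K)) := by rw [hc5K]; noncomm_ring
      _ = (c₁ * b) ^ K * (a ^ (2 * K) * (a * x)) := by rw [haK]
      _ = (c₁ * b) ^ K * a ^ (2 * K) := by rw [← hN_def, habs_a]
  have hfbN : (b * y) * (a * b) ^ N = (a * b) ^ N := by
    rw [hN_def, P2 K]
    have hfb : (b * y) * b ^ N = b ^ N := by
      have hc : Commute (b * y) b := by
        have : b * (b * y) = (b * y) * b := ae_comm' hy1
        exact this.symm
      calc (b * y) * b ^ N = b ^ N * (b * y) := (hc.pow_right N).eq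
        _ = b ^ N := habs_b
    calc (b * y) * (b ^ (2 * K) * (a * c₂) ^ K)
        = ((b * y) * b ^ (2 * K)) * (a * c₂) ^ K := by noncomm_ring
      _ = b ^ (2 * K) * (a * c₂) ^ K := by rw [← hN_def, hfb]
  -- Goal 1
  have G1a : (a * b) * (y * x) = (a * x) * (b * y) := by
    calc (a * b) * (y * x) = a * ((b * y) * x) := by noncomm_ring
      _ = a * (x * (b * y)) := by rw [← C4]
      _ = (a * x) * (b * y) := by noncomm_ring
  have G1b : (y * x) * (a * b) = (a * x) * (b * y) := by
    calc (y * x) * (a * b) = y * ((x * a) * b) := by noncomm_ring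
      _ = y * ((a * x) * b) := by rw [← hx1]
      _ = (y * (a * x)) * b := by noncomm_ring
      _ = ((a * x) * y) * b := by rw [C3]
      _ = (a * x) * (y * b) := by noncomm_ring
      _ = (a * x) * (b * y) := by rw [← hy1]
  have goal1 : (a * b) * (y * x) = (y * x) * (a * b) := by rw [G1a, ← G1b]
  -- Goal 2
  have goal2 : (y * x) * (a * b) * (y * x) = y * x := by
    have hxx : (a * x) * x = x := by
      calc (a * x) * x = (x * a) * x := by rw [hx1]
        _ = x := hx2
    calc (y * x) * (a * b) * (y * x)
        = ((a * x) * (b * y)) * (y * x) := by rw [G1b]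
      _ = (a * x) * (((b * y) * y) * x) := by noncomm_ring
      _ = (a * x) * (((y * b) * y) * x) := by rw [hy1]
      _ = (a * x) * (y * x) := by rw [hy2]
      _ = ((a * x) * y) * x := by noncomm_ring
      _ = (y * (a * x)) * x := by rw [← C3]
      _ = y * ((a * x) * x) := by noncomm_ring
      _ = y * x := by rw [hxx]
  refine ⟨goal1, goal2, ?_⟩
  -- Goal 3
  obtain ⟨w, hw⟩ : ∃ w, w = (a * x) * (b * y) := ⟨_, rfl⟩
  have hG1a : (a * b) * (y * x) = w := by rw [hw]; exact G1a
  have hG1b : (y * x) * (a * b) = w := by rw [hw]; exact G1b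
  have hwc : (a * b) * w = w * (a * b) := by
    calc (a * b) * w = (a * b) * ((y * x) * (a * b)) := by rw [hG1b]
      _ = ((a * b) * (y * x)) * (a * b) := by noncomm_ring
      _ = w * (a * b) := by rw [hG1a]
  have hwidem : w * w = w := by
    have step : w * w = (a * b) * ((y * x) * (a * b) * (y * x)) := by
      rw [← hG1a]
      noncomm_ring
    rw [step, goal2, hG1a]
  have hD : (a * b) * (1 - w) = a * b - (a * b) ^ 2 * (y * x) := by
    calc (a * b) * (1 - w) = a * b - (a * b) * w := by noncomm_ring
      _ = a * b - (a * b) * ((a * b) * (y * x)) := by rw [hG1a]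
      _ = a * b - (a * b) ^ 2 * (y * x) := by noncomm_ring
  have h1wc : Commute (a * b) (1 - w) :=
    (Commute.one_right (a * b)).sub_right hwc
  have h1widem : (1 - w) * (1 - w) = 1 - w := by noncomm_ring [hwidem]
  have hpow : ((a * b) * (1 - w)) ^ N = (a * b) ^ N * (1 - w) := by
    rw [h1wc.mul_pow N]
    congr 1
    obtain ⟨k, hk⟩ : ∃ k, N = k + 1 := ⟨N - 1, by omega⟩
    rw [hk]; exact idem_pow' h1widem k
  have habsw : (a * b) ^ N * w = (a * b) ^ N := by
    have hcw : Commute w ((a * b) ^ N) := Commute.pow_right hwc.symm N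
    calc (a * b) ^ N * w = w * (a * b) ^ N := hcw.eq.symm.symm ▸ hcw.eq.symm
      _ = ((a * x) * (b * y)) * (a * b) ^ N := by rw [hw]
      _ = (a * x) * ((b * y) * (a * b) ^ N) := by noncomm_ring
      _ = (a * x) * (a * b) ^ N := by rw [hfbN]
      _ = (a * b) ^ N := heaN
  refine ⟨N, ?_⟩
  rw [← hD, hpow]
  calc (a * b) ^ N * (1 - w) = (a * b) ^ N - (a * b) ^ N * w := by noncomm_ring
    _ = 0 := by rw [habsw, sub_self]
end

section
/- Let R be a ring and a, b, c ∈ R with a invertible, a*b = c*a, and b*a = a*c. Then a + b has a Drazin inverse if and only if a + c has a Drazin inverse. -/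
private lemma conj_drazin {R : Type*} [Ring R] (u : Rˣ) (x : R)
    (h : ∃ v : R, x * v = v * x ∧ v * x * v = v ∧ IsNilpotent (x - x ^ 2 * v)) :
    ∃ v : R, (↑u⁻¹ * x * ↑u) * v = v * (↑u⁻¹ * x * ↑u) ∧
      v * (↑u⁻¹ * x * ↑u) * v = v ∧
      IsNilpotent ((↑u⁻¹ * x * ↑u) - (↑u⁻¹ * x * ↑u) ^ 2 * v) := by
  obtain ⟨v, hc, hv, n, hn⟩ := h
  have key : ∀ y z : R, (↑u⁻¹ * y * ↑u) * (↑u⁻¹ * z * ↑u) = ↑u⁻¹ * (y * z) * ↑u := by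
    intro y z
    simp [mul_assoc, Units.mul_inv_cancel_left]
  have pow : ∀ (y : R) (k : ℕ), (↑u⁻¹ * y * ↑u) ^ k = ↑u⁻¹ * y ^ k * ↑u ∨ k = 0 := by
    intro y k
    induction k with
    | zero => exact Or.inr rfl
    | succ k ih =>
      left
      rcases ih with ih | ih
      · rw [pow_succ, ih, key, ← pow_succ]
      · simp [ih, pow_one]
  refine ⟨↑u⁻¹ * v * ↑u, ?_, ?_, ?_⟩
  · rw [key, key, hc]
  · rw [key, key, hv]
  · have sq : (↑u⁻¹ * x * ↑u) ^ 2 = ↑u⁻¹ * x ^ 2 * ↑u := by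
      rw [sq, key, ← sq]
    have : (↑u⁻¹ * x * ↑u) - (↑u⁻¹ * x * ↑u) ^ 2 * (↑u⁻¹ * v * ↑u)
        = ↑u⁻¹ * (x - x ^ 2 * v) * ↑u := by
      rw [sq, key]; noncomm_ring
    rw [this]
    refine ⟨n + 1, ?_⟩
    rcases pow (x - x ^ 2 * v) (n + 1) with h | h
    · rw [h]
      have : (x - x ^ 2 * v) ^ (n + 1) = 0 := by
        rw [pow_succ, hn, zero_mul]
      simp [this]
    · exact absurd h (Nat.succ_ne_zero n)

theorem stmt_13 {R : Type*} [Ring R] (a b c : R) (ha : IsUnit a)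
    (h1 : a * b = c * a) (h2 : b * a = a * c) :
    (∃ v : R, (a + b) * v = v * (a + b) ∧ v * (a + b) * v = v ∧
        IsNilpotent ((a + b) - (a + b) ^ 2 * v)) ↔
    (∃ w : R, (a + c) * w = w * (a + c) ∧ w * (a + c) * w = w ∧
        IsNilpotent ((a + c) - (a + c) ^ 2 * w)) := by
  obtain ⟨u, rfl⟩ := ha
  have hb : b = ↑u⁻¹ * c * ↑u := by
    have := congrArg (fun t => (↑u⁻¹ : R) * t) h1
    simpa [mul_assoc] using this
  have hab : (↑u : R) + b = ↑u⁻¹ * ((↑u : R) + c) * ↑u := by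
    rw [hb]; simp [mul_add, add_mul, mul_assoc, Units.inv_mul_cancel_left]
  have hca : (↑u : R) + c = ↑(u⁻¹)⁻¹ * ((↑u : R) + b) * ↑u⁻¹ := by
    rw [hab]; simp [mul_assoc, Units.mul_inv_cancel_left]
  constructor
  · intro h
    rw [hca]
    exact conj_drazin u⁻¹ _ h
  · intro h
    rw [hab]
    exact conj_drazin u _ h
end

section
/- Let A be a unital complex Banach algebra and a, b ∈ A with a quasinilpotent (spectral radius zero). If there exists c ∈ A with a*b = c*a and b*a = a*c, then a*b is quasinilpotent. -/
/-!
With `x = a * b` and `y = c * b`, the intertwining relations give `x ^ 2 = a ^ 2 * y` and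
`x * y = y * x`, hence `(x ^ 2) ^ m = (a ^ 2) ^ m * y ^ m`. Gelfand's formula then bounds
`ρ(x) ^ 2 = ρ(x ^ 2)` by `ρ(a ^ 2) * ‖y‖ = ρ(a) ^ 2 * ‖y‖ = 0`.
-/

open Filter ENNReal

lemma spectralRadius_pow_of_pos {𝕜 A : Type*} [NormedField 𝕜] [IsAlgClosed 𝕜] [Ring A]
    [Algebra 𝕜 A] (a : A) {n : ℕ} (hn : 0 < n) :
    spectralRadius 𝕜 (a ^ n) = spectralRadius 𝕜 a ^ n := by
  refine le_antisymm ?_ (spectrum.spectralRadius_pow_le a n hn.ne')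
  rw [spectralRadius, spectrum.map_pow_of_pos a hn]
  refine iSup₂_le ?_
  rintro _ ⟨z, hz, rfl⟩
  rw [nnnorm_pow, ENNReal.coe_pow]
  exact pow_le_pow_left' (le_iSup₂ (f := fun k (_ : k ∈ spectrum 𝕜 a) => (‖k‖₊ : ℝ≥0∞)) z hz) n

lemma spectralRadius_le_mul_nnnorm_of_pow_eq {A : Type*} [NormedRing A] [NormedAlgebra ℂ A]
    [CompleteSpace A] {x p y : A} (h : ∀ m : ℕ, x ^ m = p ^ m * y ^ m) :
    spectralRadius ℂ x ≤ spectralRadius ℂ p * ‖y‖₊ := by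
  have hbound : ∀ᶠ m : ℕ in atTop, (‖x ^ m‖₊ : ℝ≥0∞) ^ (1 / m : ℝ) ≤
      (‖p ^ m‖₊ : ℝ≥0∞) ^ (1 / m : ℝ) * ‖y‖₊ := by
    filter_upwards [eventually_gt_atTop 0] with m hm
    have hnorm : (‖x ^ m‖₊ : ℝ≥0∞) ≤ ‖p ^ m‖₊ * (‖y‖₊ : ℝ≥0∞) ^ m := by
      rw [h m]
      exact_mod_cast (nnnorm_mul_le _ _).trans (mul_le_mul_right (nnnorm_pow_le' y hm) _)
    calc (‖x ^ m‖₊ : ℝ≥0∞) ^ (1 / m : ℝ)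
        ≤ (‖p ^ m‖₊ * (‖y‖₊ : ℝ≥0∞) ^ m) ^ (1 / m : ℝ) := by gcongr
      _ = (‖p ^ m‖₊ : ℝ≥0∞) ^ (1 / m : ℝ) * ‖y‖₊ := by
        rw [ENNReal.mul_rpow_of_nonneg _ _ (by positivity), one_div,
          ENNReal.pow_rpow_inv_natCast hm.ne']
  calc spectralRadius ℂ x
      ≤ atTop.liminf fun m : ℕ => (‖x ^ m‖₊ : ℝ≥0∞) ^ (1 / m : ℝ) :=
        spectrum.spectralRadius_le_liminf_pow_nnnorm_pow_one_div ℂ x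
    _ ≤ atTop.liminf fun m : ℕ => (‖p ^ m‖₊ : ℝ≥0∞) ^ (1 / m : ℝ) * ‖y‖₊ :=
        liminf_le_liminf hbound
    _ = spectralRadius ℂ p * ‖y‖₊ :=
        (ENNReal.Tendsto.mul_const (spectrum.pow_nnnorm_pow_one_div_tendsto_nhds_spectralRadius p)
          (Or.inr coe_ne_top)).liminf_eq

section Monoid

variable {M : Type*} [Monoid M] {a b c : M}

lemma commute_mul_mul_of_mul_eq (h₁ : a * b = c * a) (h₂ : b * a = a * c) :
    Commute (a * b) (c * b) := by
  calc a * b * (c * b) = c * a * (c * b) := by rw [h₁]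
    _ = c * (a * c) * b := by simp only [mul_assoc]
    _ = c * b * (a * b) := by rw [← h₂]; simp only [mul_assoc]

lemma mul_pow_two_eq_of_mul_eq (h₂ : b * a = a * c) : (a * b) ^ 2 = a ^ 2 * (c * b) := by
  calc (a * b) ^ 2 = a * (b * a) * b := by rw [sq]; simp only [mul_assoc]
    _ = a ^ 2 * (c * b) := by rw [h₂, sq]; simp only [mul_assoc]

lemma pow_two_pow_eq_of_commute {x p y : M} (hx : x ^ 2 = p * y) (hxy : Commute x y) (m : ℕ) :
    (x ^ 2) ^ m = p ^ m * y ^ m := by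
  induction m with
  | zero => simp
  | succ m ih =>
    calc (x ^ 2) ^ (m + 1) = p * (y * (x ^ 2) ^ m) := by rw [pow_succ', hx, mul_assoc]
      _ = p ^ (m + 1) * y ^ (m + 1) := by
        rw [((hxy.pow_left 2).pow_left m).symm.eq, ih, pow_succ', pow_succ]
        simp only [mul_assoc]

end Monoid

theorem stmt_15 {A : Type*} [NormedRing A] [NormedAlgebra ℂ A] [CompleteSpace A]
    (a b : A) (ha : spectralRadius ℂ a = 0)
    (h : ∃ c : A, a * b = c * a ∧ b * a = a * c) :
    spectralRadius ℂ (a * b) = 0 := by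
  obtain ⟨c, h₁, h₂⟩ := h
  have hsq : spectralRadius ℂ ((a * b) ^ 2) = 0 := by
    refine le_antisymm ?_ bot_le
    calc spectralRadius ℂ ((a * b) ^ 2) ≤ spectralRadius ℂ (a ^ 2) * ‖c * b‖₊ :=
          spectralRadius_le_mul_nnnorm_of_pow_eq
            (pow_two_pow_eq_of_commute (mul_pow_two_eq_of_mul_eq h₂)
              (commute_mul_mul_of_mul_eq h₁ h₂))
      _ = 0 := by rw [spectralRadius_pow_of_pos a two_pos, ha]; simp
  rwa [spectralRadius_pow_of_pos _ two_pos, pow_eq_zero_iff two_ne_zero] at hsq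
end

section
/- Let A be a unital complex Banach algebra and a, b ∈ A both quasinilpotent. If a, b are {a,b}-weakly commutative (there exist c₁, c₂ with a*b = c₁*a, b*a = a*c₁, a*b = b*c₂, b*a = c₂*b), then a + b is quasinilpotent. -/
/-!
By Gelfand's formula, `x` is quasinilpotent iff `‖xⁿ‖ = O(εⁿ)` for every `ε > 0`. In this form
quasinilpotence visibly passes from `x` to `x * y` for any `y` commuting with `x`, and, by the
binomial formula, from commuting `x` and `y` to `x + y`. Since the spectral radius satisfies
`r(x)² ≤ r(x²)`, it also passes from `x²` back to `x`.

The weak commutation relations make `a²` commute with `b` and `c₁`, and `b²` with `a`; hence the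
four summands of `(a + b)² = a² + b² + ab + ba` commute pairwise. Moreover `(ab)² = a² (c₁ b)` and
`(ba)² = (b c₁) a²` with `a²` commuting with both factors, so all four summands are
quasinilpotent, hence so are `(a + b)²` and `a + b`.
-/

open Filter Asymptotics

theorem commute_mul_swap_of_commute_mul_self {M : Type*} [Semigroup M] {a b : M}
    (ha : Commute (a * a) b) (hb : Commute (b * b) a) : Commute (a * b) (b * a) :=
  calc a * b * (b * a) = a * a * (b * b) := by rw [mul_assoc, ← mul_assoc b, hb.eq, ← mul_assoc]
    _ = b * b * (a * a) := (ha.mul_right ha).eq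
    _ = b * a * (a * b) := by rw [mul_assoc b a, ← mul_assoc a, ha.eq, ← mul_assoc b b]

theorem spectralRadius_eq_zero_of_spectralRadius_pow_eq_zero {𝕜 A : Type*} [NormedField 𝕜]
    [Ring A] [Algebra 𝕜 A] {x : A} {n : ℕ} (hn : n ≠ 0) (h : spectralRadius 𝕜 (x ^ n) = 0) :
    spectralRadius 𝕜 x = 0 :=
  pow_eq_zero_iff hn |>.mp <| le_antisymm (h ▸ spectrum.spectralRadius_pow_le x n hn) bot_le

theorem spectralRadius_eq_zero_of_isBigO_pow {𝕜 A : Type*} [NormedField 𝕜] [NormedRing A]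
    [NormedAlgebra 𝕜 A] [CompleteSpace A] {x : A}
    (h : ∀ ε : ℝ, 0 < ε → (x ^ ·) =O[atTop] (ε ^ ·)) : spectralRadius 𝕜 x = 0 := by
  suffices hσ : ∀ k ∈ spectrum 𝕜 x, k = 0 by
    simpa [spectralRadius] using hσ
  intro k hk
  by_contra hk0
  have hr : 0 < ‖k‖ / 2 := by positivity
  obtain ⟨C, -, hC⟩ := bound_of_isBigO_nat_atTop (h _ hr)
  obtain ⟨n, hn⟩ := pow_unbounded_of_one_lt (C * ‖(1 : A)‖) one_lt_two
  have hkn : (2 : ℝ) ^ n * (‖k‖ / 2) ^ n ≤ C * ‖(1 : A)‖ * (‖k‖ / 2) ^ n :=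
    calc (2 : ℝ) ^ n * (‖k‖ / 2) ^ n = ‖k ^ n‖ := by rw [← mul_pow, norm_pow]; ring_nf
      _ ≤ ‖x ^ n‖ * ‖(1 : A)‖ := spectrum.norm_le_norm_mul_of_mem (spectrum.pow_mem_pow x n hk)
      _ ≤ C * ‖(‖k‖ / 2) ^ n‖ * ‖(1 : A)‖ := by gcongr; exact hC (by positivity)
      _ = C * ‖(1 : A)‖ * (‖k‖ / 2) ^ n := by rw [norm_pow, Real.norm_of_nonneg hr.le]; ring
  exact hn.not_ge (le_of_mul_le_mul_right hkn (by positivity))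

section Complex

variable {A : Type*} [NormedRing A] [NormedAlgebra ℂ A] [CompleteSpace A]

theorem isBigO_pow_of_spectralRadius_eq_zero {x : A} (hx : spectralRadius ℂ x = 0) {ε : ℝ}
    (hε : 0 < ε) : (x ^ ·) =O[atTop] (ε ^ ·) := by
  have hlim := spectrum.pow_norm_pow_one_div_tendsto_nhds_spectralRadius x
  rw [hx] at hlim
  refine IsBigO.of_bound 1 ?_
  filter_upwards [hlim.eventually_lt_const (ENNReal.ofReal_pos.mpr hε), eventually_ne_atTop 0]
    with n hn hn0
  rw [ENNReal.ofReal_lt_ofReal_iff hε, one_div] at hn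
  calc ‖x ^ n‖ = (‖x ^ n‖ ^ (n⁻¹ : ℝ)) ^ n := (Real.rpow_inv_natCast_pow (norm_nonneg _) hn0).symm
    _ ≤ ε ^ n := by gcongr
    _ = 1 * ‖ε ^ n‖ := by rw [one_mul, norm_pow, Real.norm_of_nonneg hε.le]

theorem spectralRadius_eq_zero_iff_isBigO_pow {x : A} :
    spectralRadius ℂ x = 0 ↔ ∀ ε : ℝ, 0 < ε → (x ^ ·) =O[atTop] (ε ^ ·) :=
  ⟨fun hx _ ↦ isBigO_pow_of_spectralRadius_eq_zero hx, spectralRadius_eq_zero_of_isBigO_pow⟩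

namespace Commute

variable {x y : A}

theorem spectralRadius_mul_eq_zero_left (h : Commute x y) (hx : spectralRadius ℂ x = 0) :
    spectralRadius ℂ (x * y) = 0 := by
  rw [spectralRadius_eq_zero_iff_isBigO_pow] at hx ⊢
  intro ε hε
  set δ := ε / (‖y‖ + 1)
  have hy : (y ^ ·) =O[atTop] (‖y‖ ^ ·) := IsBigO.of_bound 1 <| by
    filter_upwards [eventually_ne_atTop 0] with n hn
    simpa using norm_pow_le' y (Nat.pos_of_ne_zero hn)
  have hδy : δ * ‖y‖ ≤ ε := by
    rw [div_mul_eq_mul_div, div_le_iff₀ (by positivity)]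
    nlinarith [norm_nonneg y]
  calc (fun n ↦ (x * y) ^ n) = fun n ↦ x ^ n * y ^ n := funext h.mul_pow
    _ =O[atTop] fun n ↦ δ ^ n * ‖y‖ ^ n := (hx δ (by positivity)).mul hy
    _ =O[atTop] (ε ^ ·) := IsBigO.of_bound 1 <| Eventually.of_forall fun n ↦ by
      rw [← _root_.mul_pow, one_mul, norm_pow, norm_pow, Real.norm_of_nonneg (by positivity),
        Real.norm_of_nonneg hε.le]
      gcongr

theorem spectralRadius_add_eq_zero (h : Commute x y) (hx : spectralRadius ℂ x = 0)
    (hy : spectralRadius ℂ y = 0) : spectralRadius ℂ (x + y) = 0 := by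
  rw [spectralRadius_eq_zero_iff_isBigO_pow] at hx hy ⊢
  intro ε hε
  have hδ : 0 < ε / 2 := by positivity
  have bound {z : A} (hz : (z ^ ·) =O[atTop] ((ε / 2) ^ ·)) :
      ∃ C, 0 < C ∧ ∀ n, ‖z ^ n‖ ≤ C * (ε / 2) ^ n := by
    obtain ⟨C, hC, hCz⟩ := bound_of_isBigO_nat_atTop hz
    exact ⟨C, hC, fun n ↦ by simpa [abs_of_pos hε] using hCz (by positivity)⟩
  obtain ⟨C₁, hC₁, hx⟩ := bound (hx _ hδ)
  obtain ⟨C₂, -, hy⟩ := bound (hy _ hδ)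
  refine IsBigO.of_bound (C₁ * C₂) (Eventually.of_forall fun n ↦ ?_)
  calc ‖(x + y) ^ n‖
      = ‖∑ k ∈ Finset.range (n + 1), n.choose k • (x ^ k * y ^ (n - k))‖ := by
        simp only [h.add_pow, nsmul_eq_mul']
    _ ≤ ∑ k ∈ Finset.range (n + 1),
          (C₁ * (ε / 2) ^ k) * (C₂ * (ε / 2) ^ (n - k)) * n.choose k := by
        refine (norm_sum_le _ _).trans (Finset.sum_le_sum fun k _ ↦ ?_)
        refine norm_nsmul_le.trans ?_
        rw [mul_comm]
        gcongr
        exact (norm_mul_le _ _).trans (mul_le_mul (hx k) (hy _) (norm_nonneg _) (by positivity))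
    _ = C₁ * C₂ * (ε / 2 + ε / 2) ^ n := by
        rw [_root_.add_pow, Finset.mul_sum]
        exact Finset.sum_congr rfl fun k _ ↦ by ring
    _ = C₁ * C₂ * ‖ε ^ n‖ := by rw [add_halves, norm_pow, Real.norm_of_nonneg hε.le]

theorem spectralRadius_mul_eq_zero_right (h : Commute x y) (hy : spectralRadius ℂ y = 0) :
    spectralRadius ℂ (x * y) = 0 :=
  h.eq ▸ h.symm.spectralRadius_mul_eq_zero_left hy

end Commute

end Complex

theorem stmt_16 {A : Type*} [NormedRing A] [NormedAlgebra ℂ A] [CompleteSpace A]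
    (a b : A) (ha : spectralRadius ℂ a = 0) (hb : spectralRadius ℂ b = 0)
    (h1 : ∃ c₁ : A, a * b = c₁ * a ∧ b * a = a * c₁)
    (h2 : ∃ c₂ : A, a * b = b * c₂ ∧ b * a = c₂ * b) :
    spectralRadius ℂ (a + b) = 0 := by
  obtain ⟨c₁, hab₁, hba₁⟩ := h1
  obtain ⟨c₂, hab₂, hba₂⟩ := h2
  have haa_a : Commute (a * a) a := (Commute.refl a).mul_left (Commute.refl a)
  have hbb_b : Commute (b * b) b := (Commute.refl b).mul_left (Commute.refl b)
  have haa_b : Commute (a * a) b := SemiconjBy.mul_left hba₁.symm hab₁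
  have haa_c₁ : Commute (a * a) c₁ := SemiconjBy.mul_left hab₁ hba₁.symm
  have hbb_a : Commute (b * b) a := SemiconjBy.mul_left hab₂.symm hba₂
  have hraa := (Commute.refl a).spectralRadius_mul_eq_zero_left ha
  have hrbb := (Commute.refl b).spectralRadius_mul_eq_zero_left hb
  have hrab : spectralRadius ℂ (a * b) = 0 := by
    refine spectralRadius_eq_zero_of_spectralRadius_pow_eq_zero two_ne_zero ?_
    rw [sq, show a * b * (a * b) = a * a * (c₁ * b) by
      rw [mul_assoc, ← mul_assoc b, hba₁, mul_assoc, ← mul_assoc]]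
    exact (haa_c₁.mul_right haa_b).spectralRadius_mul_eq_zero_left hraa
  have hrba : spectralRadius ℂ (b * a) = 0 := by
    refine spectralRadius_eq_zero_of_spectralRadius_pow_eq_zero two_ne_zero ?_
    rw [sq, show b * a * (b * a) = b * c₁ * (a * a) by
      rw [mul_assoc, ← mul_assoc a, hab₁, mul_assoc, ← mul_assoc]]
    exact (haa_b.mul_right haa_c₁).symm.spectralRadius_mul_eq_zero_right hraa
  refine spectralRadius_eq_zero_of_spectralRadius_pow_eq_zero two_ne_zero ?_
  rw [sq, show (a + b) * (a + b) = a * a + b * b + a * b + b * a by noncomm_ring]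
  refine Commute.spectralRadius_add_eq_zero ?_
    (Commute.spectralRadius_add_eq_zero ?_
      (Commute.spectralRadius_add_eq_zero (haa_b.mul_right haa_b) hraa hrbb) hrab) hrba
  · exact ((haa_b.mul_right haa_a).add_left (hbb_b.mul_right hbb_a)).add_left
      (commute_mul_swap_of_commute_mul_self haa_b hbb_a)
  · exact (haa_a.mul_right haa_b).add_left (hbb_a.mul_right hbb_b)
end

section
/- Let A be a unital complex Banach algebra, a ∈ A with generalized Drazin inverse x (a*x = x*a, x*a*x = x, a - a^2*x quasinilpotent), and b, c ∈ A with a*b = c*a and b*a = a*c. Then (a*x)*b = b*(a*x) and x*b = c*x. -/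
/-!
With `p = a * x` the spectral idempotent, `x^n * a^n = p` and `a - a^2 * x = a * (1 - p)`, so
`p * b * (1 - p) = x^n * b * (a - a^2 * x)^n` for every `b` commuting with `a`. Quasinilpotence
of `a - a^2 * x` makes the right side decay faster than `‖x‖^n` grows, so `p` and then `x`
commute with `b`. The intertwining relations give `Commute (a^2) b`, and `x^2` is the
generalized Drazin inverse of `a^2`, hence commutes with `b`; finally `x = a * x^2`.
-/

open Filter Topology
open scoped NNReal ENNReal

section

variable {A : Type*} [SeminormedRing A]

lemma norm_pow_mul_mul_le {u v w : A} {n : ℕ} (hn : n ≠ 0) :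
    ‖u ^ n * v * w‖ ≤ ‖u‖ ^ n * ‖w‖ * ‖v‖ :=
  calc ‖u ^ n * v * w‖ ≤ ‖u ^ n‖ * ‖v‖ * ‖w‖ := norm_mul₃_le
    _ ≤ ‖u‖ ^ n * ‖v‖ * ‖w‖ := by gcongr; exact norm_pow_le' u (Nat.pos_of_ne_zero hn)
    _ = ‖u‖ ^ n * ‖w‖ * ‖v‖ := by ring

lemma norm_mul_mul_pow_le {u v w : A} {n : ℕ} (hn : n ≠ 0) :
    ‖w * v * u ^ n‖ ≤ ‖u‖ ^ n * ‖w‖ * ‖v‖ :=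
  calc ‖w * v * u ^ n‖ ≤ ‖w‖ * ‖v‖ * ‖u ^ n‖ := norm_mul₃_le
    _ ≤ ‖w‖ * ‖v‖ * ‖u‖ ^ n := by gcongr; exact norm_pow_le' u (Nat.pos_of_ne_zero hn)
    _ = ‖u‖ ^ n * ‖w‖ * ‖v‖ := by ring

end

section

variable {A : Type*} [NormedRing A] [NormedAlgebra ℂ A]

section Quasinilpotent

variable [CompleteSpace A] {q : A}

lemma spectralRadius_pow_eq_zero (hq : spectralRadius ℂ q = 0) {n : ℕ} (hn : n ≠ 0) :
    spectralRadius ℂ (q ^ n) = 0 := by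
  rcases subsingleton_or_nontrivial A with _ | _
  · simp
  refine nonpos_iff_eq_zero.mp (iSup₂_le ?_)
  rw [spectrum.map_pow]
  rintro - ⟨z, hz, rfl⟩
  have hz0 : (‖z‖₊ : ℝ≥0∞) ≤ 0 := hq ▸ le_iSup₂ (f := fun k _ => (‖k‖₊ : ℝ≥0∞)) z hz
  simp_all

lemma tendsto_pow_mul_norm_pow_of_spectralRadius_eq_zero (hq : spectralRadius ℂ q = 0) (r : ℝ) :
    Tendsto (fun n : ℕ => r ^ n * ‖q ^ n‖) atTop (𝓝 0) := by
  set ε : ℝ≥0 := (2 * (‖r‖₊ + 1))⁻¹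
  have hroot : ∀ᶠ n : ℕ in atTop, (‖q ^ n‖₊ : ℝ≥0∞) ^ (1 / n : ℝ) < ε := by
    have gelfand := spectrum.pow_nnnorm_pow_one_div_tendsto_nhds_spectralRadius q
    rw [hq] at gelfand
    exact gelfand.eventually (gt_mem_nhds (ENNReal.coe_pos.mpr (by positivity)))
  have hbound : ∀ᶠ n : ℕ in atTop, ‖r ^ n * ‖q ^ n‖‖ ≤ (1 / 2 : ℝ) ^ n := by
    filter_upwards [hroot, eventually_ne_atTop 0] with n hn hn0
    rw [one_div, ENNReal.rpow_inv_lt_iff (by positivity), ENNReal.rpow_natCast,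
      ← ENNReal.coe_pow, ENNReal.coe_lt_coe] at hn
    suffices ‖r‖₊ ^ n * ‖q ^ n‖₊ ≤ (1 / 2) ^ n by
      rw [← coe_nnnorm, nnnorm_mul, nnnorm_pow, nnnorm_norm]
      exact_mod_cast this
    calc ‖r‖₊ ^ n * ‖q ^ n‖₊ ≤ (‖r‖₊ + 1) ^ n * ε ^ n := by
          gcongr
          exact le_self_add
      _ = (1 / 2) ^ n := by
          rw [← mul_pow]
          congr 1
          simp only [ε]
          field_simp
  exact squeeze_zero_norm' hbound
    (tendsto_pow_atTop_nhds_zero_of_lt_one (by norm_num) (by norm_num))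

lemma eq_zero_of_norm_le_pow_mul_norm_pow (hq : spectralRadius ℂ q = 0) {z : A} (C D : ℝ)
    (h : ∀ n : ℕ, n ≠ 0 → ‖z‖ ≤ C ^ n * ‖q ^ n‖ * D) : z = 0 := by
  have hlim := (tendsto_pow_mul_norm_pow_of_spectralRadius_eq_zero hq C).mul_const D
  rw [zero_mul] at hlim
  exact norm_le_zero_iff.mp (ge_of_tendsto hlim ((eventually_ne_atTop 0).mono h))

end Quasinilpotent

structure IsGeneralizedDrazinInverse (a x : A) : Prop where
  commute : Commute a x
  mul_mul_self : x * a * x = x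
  spectralRadius_sub_eq_zero : spectralRadius ℂ (a - a ^ 2 * x) = 0

namespace IsGeneralizedDrazinInverse

variable {a x b : A}

lemma isIdempotentElem_mul (h : IsGeneralizedDrazinInverse a x) : IsIdempotentElem (a * x) := by
  rw [IsIdempotentElem, mul_assoc, ← mul_assoc x, h.mul_mul_self]

lemma pow_mul_pow (h : IsGeneralizedDrazinInverse a x) {n : ℕ} (hn : n ≠ 0) :
    x ^ n * a ^ n = a * x := by
  rw [← h.commute.symm.mul_pow, ← h.commute.eq, h.isIdempotentElem_mul.pow_eq hn]

lemma commute_one_sub_mul (h : IsGeneralizedDrazinInverse a x) : Commute a (1 - a * x) :=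
  (Commute.one_right a).sub_right ((Commute.refl a).mul_right h.commute)

lemma sub_pow (h : IsGeneralizedDrazinInverse a x) {n : ℕ} (hn : n ≠ 0) :
    (a - a ^ 2 * x) ^ n = a ^ n * (1 - a * x) := by
  rw [show a - a ^ 2 * x = a * (1 - a * x) by noncomm_ring, h.commute_one_sub_mul.mul_pow,
    h.isIdempotentElem_mul.one_sub.pow_eq hn]

lemma mul_sq (h : IsGeneralizedDrazinInverse a x) : a * x ^ 2 = x := by
  rw [sq, ← mul_assoc, h.commute.eq, h.mul_mul_self]

lemma commute_mul_of_commute [CompleteSpace A] (h : IsGeneralizedDrazinInverse a x)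
    (hb : Commute a b) : Commute (a * x) b := by
  have hq := h.spectralRadius_sub_eq_zero
  have left : a * x * b * (1 - a * x) = 0 := by
    refine eq_zero_of_norm_le_pow_mul_norm_pow hq ‖x‖ ‖b‖ fun n hn => ?_
    have : a * x * b * (1 - a * x) = x ^ n * b * (a - a ^ 2 * x) ^ n :=
      calc a * x * b * (1 - a * x) = x ^ n * (a ^ n * b) * (1 - a * x) := by
            rw [← h.pow_mul_pow hn, mul_assoc (x ^ n)]
        _ = x ^ n * b * (a - a ^ 2 * x) ^ n := by
            rw [(hb.pow_left n).eq, h.sub_pow hn]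
            simp only [mul_assoc]
    exact this ▸ norm_pow_mul_mul_le hn
  have right : (1 - a * x) * b * (a * x) = 0 := by
    refine eq_zero_of_norm_le_pow_mul_norm_pow hq ‖x‖ ‖b‖ fun n hn => ?_
    have : (1 - a * x) * b * (a * x) = (a - a ^ 2 * x) ^ n * b * x ^ n :=
      calc (1 - a * x) * b * (a * x) = (1 - a * x) * (a ^ n * b) * x ^ n := by
            rw [← h.pow_mul_pow hn, ← (h.commute.pow_pow n n).eq, (hb.pow_left n).eq]
            noncomm_ring
        _ = (a - a ^ 2 * x) ^ n * b * x ^ n := by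
            rw [h.sub_pow hn, (h.commute_one_sub_mul.pow_left n).eq]
            simp only [mul_assoc]
    exact this ▸ norm_mul_mul_pow_le hn
  rw [mul_sub, mul_one, sub_eq_zero] at left
  rw [sub_mul, sub_mul, one_mul, sub_eq_zero] at right
  exact left.trans right.symm

lemma commute_of_commute [CompleteSpace A] (h : IsGeneralizedDrazinInverse a x)
    (hb : Commute a b) : Commute x b := by
  have hp := h.commute_mul_of_commute hb
  have hxb : x * b = x * (a * (b * x)) :=
    calc x * b = x * a * x * b := by rw [h.mul_mul_self]
      _ = x * (a * x * b) := by simp only [mul_assoc]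
      _ = x * (a * (b * x)) := by rw [hp.eq, ← mul_assoc b, ← hb.eq, mul_assoc]
  have hbx : b * x = x * (a * (b * x)) :=
    calc b * x = b * (a * x) * x := by rw [mul_assoc, h.commute.eq, h.mul_mul_self]
      _ = x * (a * (b * x)) := by rw [← hp.eq, h.commute.eq]; simp only [mul_assoc]
  exact hxb.trans hbx.symm

lemma sq [CompleteSpace A] (h : IsGeneralizedDrazinInverse a x) :
    IsGeneralizedDrazinInverse (a ^ 2) (x ^ 2) where
  commute := h.commute.pow_pow 2 2
  mul_mul_self := by rw [h.pow_mul_pow two_ne_zero, h.commute.eq, mul_assoc, h.mul_sq, _root_.sq]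
  spectralRadius_sub_eq_zero := by
    have hsq : a ^ 2 - (a ^ 2) ^ 2 * x ^ 2 = (a - a ^ 2 * x) ^ 2 := by
      rw [h.sub_pow two_ne_zero, _root_.sq (a ^ 2), mul_assoc, (h.commute.pow_pow 2 2).eq,
        h.pow_mul_pow two_ne_zero, mul_sub, mul_one]
    rw [hsq]
    exact spectralRadius_pow_eq_zero h.spectralRadius_sub_eq_zero two_ne_zero

end IsGeneralizedDrazinInverse

end

theorem stmt_17 {A : Type*} [NormedRing A] [NormedAlgebra ℂ A] [CompleteSpace A]
    (a x b c : A)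
    (h1 : a * x = x * a) (h2 : x * a * x = x)
    (h3 : spectralRadius ℂ (a - a ^ 2 * x) = 0)
    (h4 : a * b = c * a) (h5 : b * a = a * c) :
    (a * x) * b = b * (a * x) ∧ x * b = c * x := by
  have hx : IsGeneralizedDrazinInverse a x := ⟨h1, h2, h3⟩
  have hb : Commute (a ^ 2) b :=
    calc a ^ 2 * b = a * (c * a) := by rw [sq, mul_assoc, h4]
      _ = b * a ^ 2 := by rw [← mul_assoc, ← h5, mul_assoc, ← sq]
  have hxb : x * b = c * x :=
    calc x * b = a * (x ^ 2 * b) := by rw [← mul_assoc, hx.mul_sq]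
      _ = a * (b * x ^ 2) := by rw [(hx.sq.commute_of_commute hb).eq]
      _ = c * x := by rw [← mul_assoc, h4, mul_assoc, hx.mul_sq]
  refine ⟨?_, hxb⟩
  rw [mul_assoc, hxb, ← mul_assoc, ← h5, mul_assoc]
end

section
/- Let A be a unital complex Banach algebra, a ∈ A invertible, b ∈ A quasinilpotent, and suppose a, b are {a,b}-weakly commutative (there exist c₁, c₂ with a*b = c₁*a, b*a = a*c₁, a*b = b*c₂, b*a = c₂*b). Then a + b is invertible. -/
open Filter ENNReal Topology

/-- If `x ^ (2 * n) = b ^ (2 * n) * f ^ n` for all `n`, and `b` is quasinilpotent,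
then `x` is quasinilpotent. -/
lemma aux_quasinilpotent {A : Type*} [NormedRing A] [NormedAlgebra ℂ A] [CompleteSpace A]
    (x b f : A) (hb : spectralRadius ℂ b = 0)
    (hx : ∀ n : ℕ, x ^ (2 * n) = b ^ (2 * n) * f ^ n) :
    spectralRadius ℂ x = 0 := by
  have hX : Tendsto (fun n : ℕ => (‖x ^ (2 * n)‖₊ : ℝ≥0∞) ^ (1 / (2 * n : ℕ) : ℝ)) atTop
      (𝓝 (spectralRadius ℂ x)) :=
    (spectrum.pow_nnnorm_pow_one_div_tendsto_nhds_spectralRadius x).comp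
      (tendsto_atTop_atTop_of_monotone (fun i j hij => by omega) fun n => ⟨n, by omega⟩)
  have hB : Tendsto (fun n : ℕ => (‖b ^ (2 * n)‖₊ : ℝ≥0∞) ^ (1 / (2 * n : ℕ) : ℝ) *
      (‖f‖₊ : ℝ≥0∞) ^ ((1 : ℝ) / 2)) atTop (𝓝 0) := by
    have h0 : Tendsto (fun n : ℕ => (‖b ^ (2 * n)‖₊ : ℝ≥0∞) ^ (1 / (2 * n : ℕ) : ℝ)) atTop
        (𝓝 0) := by
      have := (spectrum.pow_nnnorm_pow_one_div_tendsto_nhds_spectralRadius b).comp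
        (tendsto_atTop_atTop_of_monotone (fun i j hij => by omega)
          (fun n : ℕ => ⟨n, by omega⟩) : Tendsto (fun n : ℕ => 2 * n) atTop atTop)
      rwa [hb] at this
    simpa using ENNReal.Tendsto.mul_const h0
      (Or.inr (by
        refine ENNReal.rpow_ne_top_of_nonneg (by norm_num) ?_
        exact ENNReal.coe_ne_top))
  have hle : ∀ᶠ n : ℕ in atTop,
      (‖x ^ (2 * n)‖₊ : ℝ≥0∞) ^ (1 / (2 * n : ℕ) : ℝ) ≤
        (‖b ^ (2 * n)‖₊ : ℝ≥0∞) ^ (1 / (2 * n : ℕ) : ℝ) * (‖f‖₊ : ℝ≥0∞) ^ ((1 : ℝ) / 2) := by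
    filter_upwards [eventually_ge_atTop 1] with n hn
    have hnorm : (‖x ^ (2 * n)‖₊ : ℝ≥0∞) ≤ (‖b ^ (2 * n)‖₊ : ℝ≥0∞) * (‖f‖₊ : ℝ≥0∞) ^ (n : ℕ) := by
      rw [hx n]
      calc (‖b ^ (2 * n) * f ^ n‖₊ : ℝ≥0∞) ≤ (‖b ^ (2 * n)‖₊ : ℝ≥0∞) * (‖f ^ n‖₊ : ℝ≥0∞) := by
            exact_mod_cast nnnorm_mul_le _ _
        _ ≤ (‖b ^ (2 * n)‖₊ : ℝ≥0∞) * (‖f‖₊ : ℝ≥0∞) ^ (n : ℕ) := by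
            gcongr
            exact_mod_cast nnnorm_pow_le' f hn
    have hexp : (0 : ℝ) ≤ 1 / (2 * n : ℕ) := by positivity
    calc (‖x ^ (2 * n)‖₊ : ℝ≥0∞) ^ (1 / (2 * n : ℕ) : ℝ)
        ≤ ((‖b ^ (2 * n)‖₊ : ℝ≥0∞) * (‖f‖₊ : ℝ≥0∞) ^ (n : ℕ)) ^ (1 / (2 * n : ℕ) : ℝ) :=
          ENNReal.rpow_le_rpow hnorm hexp
      _ = (‖b ^ (2 * n)‖₊ : ℝ≥0∞) ^ (1 / (2 * n : ℕ) : ℝ) * (‖f‖₊ : ℝ≥0∞) ^ ((1 : ℝ) / 2) := by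
          rw [ENNReal.mul_rpow_of_nonneg _ _ hexp, ← ENNReal.rpow_natCast (‖f‖₊ : ℝ≥0∞) n,
            ← ENNReal.rpow_mul]
          have hn' : (n : ℝ) ≠ 0 := by exact_mod_cast Nat.one_le_iff_ne_zero.mp hn
          have hexp2 : (n : ℝ) * (1 / (2 * n : ℕ) : ℝ) = 1 / 2 := by
            push_cast
            field_simp
          rw [hexp2]
  have := le_of_tendsto_of_tendsto hX hB hle
  simpa using this

theorem stmt_18 {A : Type*} [NormedRing A] [NormedAlgebra ℂ A] [CompleteSpace A]
    (a b : A) (ha : IsUnit a) (hb : spectralRadius ℂ b = 0)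
    (h1 : ∃ c₁ : A, a * b = c₁ * a ∧ b * a = a * c₁)
    (h2 : ∃ c₂ : A, a * b = b * c₂ ∧ b * a = c₂ * b) :
    IsUnit (a + b) := by
  obtain ⟨c₁, e1, e2⟩ := h1
  obtain ⟨c₂, e3, e4⟩ := h2
  set ai : A := ↑ha.unit⁻¹ with hai_def
  have hai1 : ai * a = 1 := ha.unit.inv_mul
  have hai2 : a * ai = 1 := ha.unit.mul_inv
  -- a² commutes with b
  have hA2 : a * (a * b) = b * a * a := by
    rw [e1, ← mul_assoc, e2]
  -- a commutes with b²
  have hB2 : a * (b * b) = b * b * a := by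
    calc a * (b * b) = (a * b) * b := by noncomm_ring
      _ = b * (c₂ * b) := by rw [e3]; noncomm_ring
      _ = b * (b * a) := by rw [← e4]
      _ = b * b * a := by noncomm_ring
  -- c₂ commutes with b²
  have hC2 : c₂ * (b * b) = b * b * c₂ := by
    calc c₂ * (b * b) = (c₂ * b) * b := by noncomm_ring
      _ = b * (a * b) := by rw [← e4]; noncomm_ring
      _ = b * (b * c₂) := by rw [e3]
      _ = b * b * c₂ := by noncomm_ring
  set x : A := ai * b with hx_def
  set f : A := ai * (ai * (ai * c₂)) with hf_def
  have hcl : ∀ y : A, ai * (a * y) = y := fun y => by rw [← mul_assoc, hai1, one_mul]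
  -- b * ai = ai * ai * b * a
  have hbai : b * ai = ai * (ai * (b * a)) := by
    have h0 : a * (a * (b * ai)) = b * a := by
      calc a * (a * (b * ai)) = (a * (a * b)) * ai := by noncomm_ring
        _ = b * a * a * ai := by rw [hA2]
        _ = b * a * (a * ai) := by noncomm_ring
        _ = b * a := by rw [hai2, mul_one]
    calc b * ai = ai * (a * (b * ai)) := (hcl _).symm
      _ = ai * (ai * (a * (a * (b * ai)))) := by rw [hcl (a * (b * ai))]
      _ = ai * (ai * (b * a)) := by rw [h0]
  -- ai commutes with b²
  have haib2 : ai * (b * b) = b * b * ai := by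
    calc ai * (b * b) = ai * (b * b * (a * ai)) := by rw [hai2, mul_one]
      _ = ai * (b * b * a * ai) := by noncomm_ring
      _ = ai * (a * (b * b) * ai) := by rw [← hB2]
      _ = ai * (a * (b * b * ai)) := by noncomm_ring
      _ = b * b * ai := hcl _
  -- key identity: x² = b² * f
  have hx2 : x * x = b * b * f := by
    calc x * x = ai * (b * ai) * b := by rw [hx_def]; noncomm_ring
      _ = ai * (ai * (ai * (b * (a * b)))) := by rw [hbai]; noncomm_ring
      _ = ai * (ai * (ai * (b * (b * c₂)))) := by rw [e3]
      _ = ai * (ai * (ai * (b * b) * c₂)) := by noncomm_ring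
      _ = ai * (ai * (b * b * ai * c₂)) := by rw [haib2]
      _ = ai * (ai * (b * b) * (ai * c₂)) := by noncomm_ring
      _ = ai * (b * b * ai * (ai * c₂)) := by rw [haib2]
      _ = ai * (b * b) * (ai * (ai * c₂)) := by noncomm_ring
      _ = b * b * ai * (ai * (ai * c₂)) := by rw [haib2]
      _ = b * b * f := by rw [hf_def]; noncomm_ring
  -- b² commutes with f
  have hcomm : Commute (b * b) f := by
    have h1' : b * b * f = f * (b * b) := by
      calc b * b * f = b * b * ai * (ai * (ai * c₂)) := by rw [hf_def]; noncomm_ring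
        _ = ai * (b * b) * (ai * (ai * c₂)) := by rw [haib2]
        _ = ai * (b * b * ai * (ai * c₂)) := by noncomm_ring
        _ = ai * (ai * (b * b) * (ai * c₂)) := by rw [haib2]
        _ = ai * (ai * (b * b * ai * c₂)) := by noncomm_ring
        _ = ai * (ai * (ai * (b * b) * c₂)) := by rw [haib2]
        _ = ai * (ai * (ai * (b * b * c₂))) := by noncomm_ring
        _ = ai * (ai * (ai * (c₂ * (b * b)))) := by rw [← hC2]
        _ = f * (b * b) := by rw [hf_def]; noncomm_ring
    exact h1'
  -- x^(2n) = b^(2n) * f^n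
  have hpow : ∀ n : ℕ, x ^ (2 * n) = b ^ (2 * n) * f ^ n := by
    intro n
    have h2n : ∀ y : A, y ^ (2 * n) = (y * y) ^ n := by
      intro y; rw [pow_mul, sq]
    rw [h2n x, h2n b, hx2, hcomm.mul_pow]
  have hxr : spectralRadius ℂ x = 0 := aux_quasinilpotent x b f hb hpow
  -- -1 ∉ spectrum x, so 1 + x is a unit
  have hmem : (-1 : ℂ) ∈ resolventSet ℂ x := by
    apply spectrum.mem_resolventSet_of_spectralRadius_lt
    rw [hxr]
    simp
  rw [spectrum.mem_resolventSet_iff] at hmem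
  have h1x : IsUnit (1 + x) := by
    have : algebraMap ℂ A (-1) - x = -(1 + x) := by
      rw [map_neg, map_one]
      noncomm_ring
    rw [this] at hmem
    exact (IsUnit.neg_iff _).mp hmem
  have hab : a + b = a * (1 + x) := by
    rw [hx_def, mul_add, mul_one, ← mul_assoc, hai2, one_mul]
  rw [hab]
  exact ha.mul h1x
end

section
/- Let R be a ring, a, b ∈ R where a has Drazin inverse x, b is nilpotent, and a, b are {a,b}-weakly commutative (there exist c₁, c₂ with a*b = c₁*a, b*a = a*c₁, a*b = b*c₂, b*a = c₂*b). Suppose further 1 + x*b is invertible with inverse u. Then u*x is a Drazin inverse of a + b. -/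
private lemma comm_of_inv {R : Type*} [Ring R] {z w e : R}
    (h1 : z * w = 1) (h2 : w * z = 1) (h : e * z = z * e) : e * w = w * e := by
  calc e * w = (w*z)*(e*w) := by rw [h2, one_mul]
    _ = w*((z*e)*w) := by noncomm_ring
    _ = w*((e*z)*w) := by rw [h]
    _ = (w*e)*(z*w) := by noncomm_ring
    _ = w*e := by rw [h1, mul_one]

private lemma idem_mul_pow {R : Type*} [Ring R] {z f : R}
    (hzf : Commute z f) (hf : IsIdempotentElem f) (n : ℕ) :
    (z*f)^(n+1) = z^(n+1) * f := by
  rw [hzf.mul_pow, hf.pow_succ_eq]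

private lemma mul_pow_swap {R : Type*} [Ring R] (a b : R) (n : ℕ) :
    (a*b)^(n+1) = a*(b*a)^n*b := by
  induction n with
  | zero => simp
  | succ m ih =>
    calc (a*b)^(m+1+1) = (a*b)^(m+1)*(a*b) := by rw [pow_succ]
      _ = (a*(b*a)^m*b)*(a*b) := by rw [ih]
      _ = a*((b*a)^m*(b*a))*b := by noncomm_ring
      _ = a*(b*a)^(m+1)*b := by rw [← pow_succ]

private lemma ba_pow {R : Type*} [Ring R] (a b c : R)
    (h1 : a*b = c*a) (h2 : b*a = a*c) (m : ℕ) :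
    (b*a)^(2*m) = a^(2*m) * (b*c)^m := by
  have hb' : Commute (a*a) b := by
    show (a*a)*b = b*(a*a)
    calc (a*a)*b = a*(a*b) := by rw [mul_assoc]
      _ = a*(c*a) := by rw [h1]
      _ = (a*c)*a := by rw [← mul_assoc]
      _ = (b*a)*a := by rw [← h2]
      _ = b*(a*a) := by rw [mul_assoc]
  have hc' : Commute (a*a) c := by
    show (a*a)*c = c*(a*a)
    calc (a*a)*c = a*(a*c) := by rw [mul_assoc]
      _ = a*(b*a) := by rw [← h2]
      _ = (a*b)*a := by rw [← mul_assoc]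
      _ = (c*a)*a := by rw [h1]
      _ = c*(a*a) := by rw [mul_assoc]
  have hcomm : Commute (a*a) (b*c) := hb'.mul_right hc'
  have hsq : (b*a)*(b*a) = (a*a)*(b*c) := by
    calc (b*a)*(b*a) = (a*c)*(a*c) := by rw [h2]
      _ = a*((c*a)*c) := by noncomm_ring
      _ = a*((a*b)*c) := by rw [← h1]
      _ = (a*a)*(b*c) := by noncomm_ring
  induction m with
  | zero => simp
  | succ n ih =>
    have e1 : 2*(n+1) = 2*n+2 := by ring
    rw [e1, pow_add, ih, pow_two, hsq]
    have hc2 : (b*c)^n*(a*a) = (a*a)*(b*c)^n := (hcomm.symm.pow_left n).eq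
    calc a^(2*n)*(b*c)^n*((a*a)*(b*c)) = a^(2*n)*((b*c)^n*(a*a))*(b*c) := by noncomm_ring
      _ = a^(2*n)*((a*a)*(b*c)^n)*(b*c) := by rw [hc2]
      _ = (a^(2*n)*(a*a))*((b*c)^n*(b*c)) := by noncomm_ring
      _ = a^(2*n+2)*(b*c)^(n+1) := by rw [← pow_two, ← pow_add, ← pow_succ]

theorem stmt_19 {R : Type*} [Ring R] (a b x u : R)
    (hx1 : a * x = x * a) (hx2 : x * a * x = x) (hx3 : IsNilpotent (a - a ^ 2 * x))
    (hb : IsNilpotent b)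
    (h1 : ∃ c₁ : R, a * b = c₁ * a ∧ b * a = a * c₁)
    (h2 : ∃ c₂ : R, a * b = b * c₂ ∧ b * a = c₂ * b)
    (hu1 : (1 + x * b) * u = 1) (hu2 : u * (1 + x * b) = 1) :
    (a + b) * (u * x) = (u * x) * (a + b) ∧
    (u * x) * (a + b) * (u * x) = u * x ∧
    IsNilpotent ((a + b) - (a + b) ^ 2 * (u * x)) := by
  obtain ⟨c₁, hab1, hba1⟩ := h1
  obtain ⟨c₂, hab2, hba2⟩ := h2
  obtain ⟨k₀, hk₀⟩ := hx3
  obtain ⟨t, ht⟩ := hb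
  -- basic facts about the idempotent e = a*x
  have hax : Commute a x := hx1
  have hxe : x*(a*x) = x := by rw [← mul_assoc, hx2]
  have hex : (a*x)*x = x := by rw [hx1]; exact hx2
  have hee : IsIdempotentElem (a*x) := by
    show (a*x)*(a*x) = a*x
    rw [mul_assoc, hxe]
  have hf_idem : IsIdempotentElem (1 - a*x) := hee.one_sub
  have hff : (1-a*x)*(1-a*x) = 1-a*x := hf_idem
  have Cae : Commute a (a*x) := (Commute.refl a).mul_right hax
  have Caf : Commute a (1-a*x) := (Commute.one_right a).sub_right Cae
  -- facts from c₁
  have haab : Commute (a*a) b := by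
    show (a*a)*b = b*(a*a)
    calc (a*a)*b = a*(a*b) := by rw [mul_assoc]
      _ = a*(c₁*a) := by rw [hab1]
      _ = (a*c₁)*a := by rw [← mul_assoc]
      _ = (b*a)*a := by rw [← hba1]
      _ = b*(a*a) := by rw [mul_assoc]
  -- nilpotency exponent
  have hP : a*(1-a*x) = a - a^2*x := by
    rw [mul_sub, mul_one, ← mul_assoc, ← pow_two]
  have hk₀' : (a*(1-a*x))^k₀ = 0 := by rw [hP]; exact hk₀
  have hPK : (a*(1-a*x))^(2*k₀+2) = 0 := pow_eq_zero_of_le (by omega) hk₀'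
  have e1 : 2*k₀+1+1 = 2*k₀+2 := by omega
  have haKf : a^(2*k₀+2)*(1-a*x) = 0 := by
    have h := idem_mul_pow Caf hf_idem (2*k₀+1)
    rw [e1] at h
    rw [← h]; exact hPK
  have hfaK : (1-a*x)*a^(2*k₀+2) = 0 := by
    rw [← (Caf.pow_left (2*k₀+2)).eq]; exact haKf
  have haKb : a^(2*k₀+2)*b = b*a^(2*k₀+2) := by
    have h2 : a^(2*k₀+2) = (a*a)^(k₀+1) := by
      rw [show (2*k₀+2) = 2*(k₀+1) from by ring, pow_mul, pow_two]
    rw [h2]; exact (haab.pow_left (k₀+1)).eq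
  have heKe : (a*x)^(2*k₀+2) = a*x := by
    have := hee.pow_succ_eq (2*k₀+1)
    rwa [e1] at this
  have heK : x^(2*k₀+2)*a^(2*k₀+2) = a*x := by
    have h3 : (x*a)^(2*k₀+2) = x^(2*k₀+2)*a^(2*k₀+2) := (hax.symm).mul_pow _
    rw [← h3, ← hx1, heKe]
  have heK' : a^(2*k₀+2)*x^(2*k₀+2) = a*x := by
    have h3 : (a*x)^(2*k₀+2) = a^(2*k₀+2)*x^(2*k₀+2) := hax.mul_pow _
    rw [← h3, heKe]
  -- e commutes with b
  have hebf : (a*x)*b*(1-a*x) = 0 := by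
    have h0 : (x^(2*k₀+2)*a^(2*k₀+2))*b*(1-a*x) = 0 := by
      calc (x^(2*k₀+2)*a^(2*k₀+2))*b*(1-a*x)
          = x^(2*k₀+2)*((a^(2*k₀+2)*b)*(1-a*x)) := by noncomm_ring
        _ = x^(2*k₀+2)*((b*a^(2*k₀+2))*(1-a*x)) := by rw [haKb]
        _ = x^(2*k₀+2)*(b*(a^(2*k₀+2)*(1-a*x))) := by rw [mul_assoc]
        _ = 0 := by rw [haKf, mul_zero, mul_zero]
    rwa [heK] at h0
  have hbef : (1-a*x)*(b*(a*x)) = 0 := by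
    have h0 : (1-a*x)*b*(a^(2*k₀+2)*x^(2*k₀+2)) = 0 := by
      calc (1-a*x)*b*(a^(2*k₀+2)*x^(2*k₀+2))
          = (1-a*x)*(b*a^(2*k₀+2))*x^(2*k₀+2) := by noncomm_ring
        _ = (1-a*x)*(a^(2*k₀+2)*b)*x^(2*k₀+2) := by rw [← haKb]
        _ = (((1-a*x)*a^(2*k₀+2))*b)*x^(2*k₀+2) := by noncomm_ring
        _ = 0 := by rw [hfaK, zero_mul, zero_mul]
    rw [heK'] at h0
    rw [← mul_assoc]; exact h0
  have Cbe : b*(a*x) = (a*x)*b := by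
    have hA : (a*x)*b = (a*x)*b*(a*x) := by
      have h := hebf
      rw [mul_sub, mul_one, sub_eq_zero] at h
      exact h
    have hB : b*(a*x) = (a*x)*(b*(a*x)) := by
      have h := hbef
      rw [sub_mul, one_mul, sub_eq_zero] at h
      exact h
    calc b*(a*x) = (a*x)*(b*(a*x)) := hB
      _ = (a*x)*b*(a*x) := by rw [mul_assoc (a*x) b (a*x)]
      _ = (a*x)*b := hA.symm
  have Cbe' : Commute b (a*x) := Cbe
  have Cbf : Commute b (1-a*x) := (Commute.one_right b).sub_right Cbe'
  -- u, v machinery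
  have hexb : (a*x)*(x*b) = x*b := by rw [← mul_assoc, hex]
  have hxbe : (x*b)*(a*x) = x*b := by
    calc (x*b)*(a*x) = x*(b*(a*x)) := by rw [mul_assoc]
      _ = x*((a*x)*b) := by rw [Cbe]
      _ = (x*(a*x))*b := by rw [← mul_assoc]
      _ = x*b := by rw [hxe]
  have hbxe : (b*x)*(a*x) = b*x := by
    calc (b*x)*(a*x) = b*(x*(a*x)) := by rw [mul_assoc]
      _ = b*x := by rw [hxe]
  have hebx : (a*x)*(b*x) = b*x := by
    calc (a*x)*(b*x) = ((a*x)*b)*x := by rw [← mul_assoc]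
      _ = (b*(a*x))*x := by rw [← Cbe]
      _ = b*((a*x)*x) := by rw [mul_assoc]
      _ = b*x := by rw [hex]
  have Ce_1xb : (a*x)*(1+x*b) = (1+x*b)*(a*x) := by
    rw [mul_add, add_mul, mul_one, one_mul, hexb, hxbe]
  have Ceu : (a*x)*u = u*(a*x) := comm_of_inv hu1 hu2 Ce_1xb
  have Ce_1bx : (a*x)*(1+b*x) = (1+b*x)*(a*x) := by
    rw [mul_add, add_mul, mul_one, one_mul, hebx, hbxe]
  have hv1 : (1+b*x)*(1-b*(u*x)) = 1 := by
    have h : (1+b*x)*(1-b*(u*x)) = 1 + b*x - b*(((1+x*b)*u)*x) := by noncomm_ring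
    rw [h, hu1]; noncomm_ring
  have hv2 : (1-b*(u*x))*(1+b*x) = 1 := by
    have h : (1-b*(u*x))*(1+b*x) = 1 + b*x - b*((u*(1+x*b))*x) := by noncomm_ring
    rw [h, hu2]; noncomm_ring
  have Cev : (a*x)*(1-b*(u*x)) = (1-b*(u*x))*(a*x) := comm_of_inv hv1 hv2 Ce_1bx
  have hxv : u*x = x*(1-b*(u*x)) := by
    calc u*x = u*(x*((1+b*x)*(1-b*(u*x)))) := by rw [hv1, mul_one]
      _ = (u*(1+x*b))*(x*(1-b*(u*x))) := by noncomm_ring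
      _ = x*(1-b*(u*x)) := by rw [hu2, one_mul]
  have hfu : (1-a*x)*u = 1-a*x := by
    have h : (1-a*x)*(1+x*b) = 1-a*x := by
      have h2 : (1-a*x)*(1+x*b) = 1 - a*x + (x*b - (a*x)*(x*b)) := by noncomm_ring
      rw [h2, hexb]; noncomm_ring
    calc (1-a*x)*u = ((1-a*x)*(1+x*b))*u := by rw [h]
      _ = (1-a*x)*((1+x*b)*u) := by rw [mul_assoc]
      _ = 1-a*x := by rw [hu1, mul_one]
  have huf : u*(1-a*x) = 1-a*x := by
    have hC : (1-a*x)*u = u*(1-a*x) :=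
      ((Commute.one_left u).sub_left Ceu).eq
    rw [← hC]; exact hfu
  have hfv : (1-a*x)*(1-b*(u*x)) = 1-a*x := by
    have h : (1+b*x)*(1-a*x) = 1-a*x := by
      have h2 : (1+b*x)*(1-a*x) = 1 - a*x + (b*x - (b*x)*(a*x)) := by noncomm_ring
      rw [h2, hbxe]; noncomm_ring
    have h3 : (1-a*x)*(1-b*(u*x)) = (1-b*(u*x))*(1-a*x) :=
      ((Commute.one_left (1-b*(u*x))).sub_left Cev).eq
    rw [h3]
    calc (1-b*(u*x))*(1-a*x) = (1-b*(u*x))*((1+b*x)*(1-a*x)) := by rw [h]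
      _ = ((1-b*(u*x))*(1+b*x))*(1-a*x) := by rw [← mul_assoc]
      _ = 1-a*x := by rw [hv2, one_mul]
  -- main identities
  have M1 : (u*x)*(a+b) = a*x := by
    calc (u*x)*(a+b) = u*(x*a + x*b) := by noncomm_ring
      _ = u*((1+x*b) - (1-a*x)) := by rw [← hx1]; noncomm_ring
      _ = u*(1+x*b) - u*(1-a*x) := by rw [mul_sub]
      _ = 1 - (1-a*x) := by rw [hu2, huf]
      _ = a*x := by noncomm_ring
  have M2 : (a+b)*(u*x) = a*x := by
    calc (a+b)*(u*x) = (a+b)*(x*(1-b*(u*x))) := by nth_rewrite 1 [hxv]; rfl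
      _ = ((1+b*x) - (1-a*x))*(1-b*(u*x)) := by noncomm_ring
      _ = (1+b*x)*(1-b*(u*x)) - (1-a*x)*(1-b*(u*x)) := by rw [sub_mul]
      _ = 1 - (1-a*x) := by rw [hv1, hfv]
      _ = a*x := by noncomm_ring
  refine ⟨?_, ?_, ?_⟩
  · rw [M2, M1]
  · rw [M1]
    calc (a*x)*(u*x) = ((a*x)*u)*x := by rw [← mul_assoc]
      _ = (u*(a*x))*x := by rw [Ceu]
      _ = u*((a*x)*x) := by rw [mul_assoc]
      _ = u*x := by rw [hex]
  · -- nilpotent part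
    have hgoal : (a+b) - (a+b)^2*(u*x) = a*(1-a*x) + b*(1-a*x) := by
      calc (a+b) - (a+b)^2*(u*x) = (a+b) - (a+b)*((a+b)*(u*x)) := by
            rw [pow_two, mul_assoc]
        _ = (a+b) - (a+b)*(a*x) := by rw [M2]
        _ = a*(1-a*x) + b*(1-a*x) := by noncomm_ring
    rw [hgoal]
    -- collapse lemma
    have hcol : ∀ (y z : R), z*(1-a*x) = (1-a*x)*z →
        (y*(1-a*x))*(z*(1-a*x)) = (y*z)*(1-a*x) := by
      intro y z hz
      calc (y*(1-a*x))*(z*(1-a*x)) = y*(((1-a*x)*z)*(1-a*x)) := by noncomm_ring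
        _ = y*((z*(1-a*x))*(1-a*x)) := by rw [hz]
        _ = y*(z*((1-a*x)*(1-a*x))) := by noncomm_ring
        _ = (y*z)*(1-a*x) := by rw [hff, ← mul_assoc]
    have CaaF : Commute (a*a) (1-a*x) := Caf.mul_left Caf
    have CbbF : Commute (b*b) (1-a*x) := Cbf.mul_left Cbf
    have CbaF : Commute (b*a) (1-a*x) := Cbf.mul_left Caf
    have CabF : Commute (a*b) (1-a*x) := Caf.mul_left Cbf
    have hQP : (b*(1-a*x))*(a*(1-a*x)) = (b*a)*(1-a*x) := hcol b a Caf.eq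
    have hPQ : (a*(1-a*x))*(b*(1-a*x)) = (a*b)*(1-a*x) := hcol a b Cbf.eq
    have hPP : (a*(1-a*x))*(a*(1-a*x)) = (a*a)*(1-a*x) := hcol a a Caf.eq
    have hQQ : (b*(1-a*x))*(b*(1-a*x)) = (b*b)*(1-a*x) := hcol b b Cbf.eq
    -- (b*a)*(1-e) is nilpotent
    have hbaK : ((b*a)*(1-a*x))^(2*k₀+2) = 0 := by
      have hh1 : ((b*a)*(1-a*x))^(2*k₀+2) = (b*a)^(2*k₀+2)*(1-a*x) := by
        have h := idem_mul_pow CbaF hf_idem (2*k₀+1)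
        rwa [e1] at h
      have hh2 : (b*a)^(2*k₀+2) = a^(2*k₀+2)*(b*c₁)^(k₀+1) := by
        have h := ba_pow a b c₁ hab1 hba1 (k₀+1)
        rwa [show 2*(k₀+1) = 2*k₀+2 from by ring] at h
      calc ((b*a)*(1-a*x))^(2*k₀+2) = (b*a)^(2*k₀+2)*(1-a*x) := hh1
        _ = (1-a*x)*(b*a)^(2*k₀+2) := (CbaF.pow_left _).eq
        _ = (1-a*x)*(a^(2*k₀+2)*(b*c₁)^(k₀+1)) := by rw [hh2]
        _ = ((1-a*x)*a^(2*k₀+2))*(b*c₁)^(k₀+1) := by rw [← mul_assoc]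
        _ = 0 := by rw [hfaK, zero_mul]
    have hQPnil : IsNilpotent ((b*(1-a*x))*(a*(1-a*x))) :=
      ⟨2*k₀+2, by rw [hQP]; exact hbaK⟩
    have hPQnil : IsNilpotent ((a*(1-a*x))*(b*(1-a*x))) := by
      obtain ⟨n, hn⟩ := hQPnil
      exact ⟨n+1, by rw [mul_pow_swap, hn, mul_zero, zero_mul]⟩
    -- commutation facts
    have habb : a*(b*b) = (b*b)*a := by
      calc a*(b*b) = (a*b)*b := by rw [← mul_assoc]
        _ = (b*c₂)*b := by rw [hab2]
        _ = b*(c₂*b) := by rw [mul_assoc]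
        _ = b*(b*a) := by rw [← hba2]
        _ = (b*b)*a := by rw [← mul_assoc]
    have habba : (a*b)*(b*a) = (b*a)*(a*b) := by
      have hh1 : (a*b)*(b*a) = (b*b)*(a*a) := by
        calc (a*b)*(b*a) = (a*(b*b))*a := by noncomm_ring
          _ = ((b*b)*a)*a := by rw [habb]
          _ = (b*b)*(a*a) := by rw [mul_assoc]
      have hh2 : (b*a)*(a*b) = (b*b)*(a*a) := by
        calc (b*a)*(a*b) = b*((a*a)*b) := by noncomm_ring
          _ = b*(b*(a*a)) := by rw [haab.eq]
          _ = (b*b)*(a*a) := by rw [← mul_assoc]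
      rw [hh1, hh2]
    have Cpq_qp : Commute ((a*(1-a*x))*(b*(1-a*x))) ((b*(1-a*x))*(a*(1-a*x))) := by
      show _ = _
      rw [hPQ, hQP, hcol (a*b) (b*a) CbaF.eq, hcol (b*a) (a*b) CabF.eq, habba]
    have hRnil : IsNilpotent ((a*(1-a*x))*(b*(1-a*x)) + (b*(1-a*x))*(a*(1-a*x))) :=
      Cpq_qp.isNilpotent_add hPQnil hQPnil
    have hPnil : IsNilpotent (a*(1-a*x)) := ⟨k₀, hk₀'⟩
    have hQnil : IsNilpotent (b*(1-a*x)) :=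
      ⟨t+1, by rw [idem_mul_pow Cbf hf_idem t, pow_succ, ht, zero_mul, zero_mul]⟩
    have hPPnil : IsNilpotent ((a*(1-a*x))*(a*(1-a*x))) :=
      (Commute.refl _).isNilpotent_mul_left hPnil
    have hQQnil : IsNilpotent ((b*(1-a*x))*(b*(1-a*x))) :=
      (Commute.refl _).isNilpotent_mul_left hQnil
    have CPPQQ : Commute ((a*(1-a*x))*(a*(1-a*x))) ((b*(1-a*x))*(b*(1-a*x))) := by
      show _ = _
      rw [hPP, hQQ, hcol (a*a) (b*b) CbbF.eq, hcol (b*b) (a*a) CaaF.eq,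
        (haab.mul_right haab).eq]
    have hSnil : IsNilpotent ((a*(1-a*x))*(a*(1-a*x)) + (b*(1-a*x))*(b*(1-a*x))) :=
      CPPQQ.isNilpotent_add hPPnil hQQnil
    -- s commutes with r
    have CPP_Q : Commute ((a*(1-a*x))*(a*(1-a*x))) (b*(1-a*x)) := by
      show _ = _
      rw [hPP, hcol (a*a) b Cbf.eq, hcol b (a*a) CaaF.eq, haab.eq]
    have CQQ_P : Commute ((b*(1-a*x))*(b*(1-a*x))) (a*(1-a*x)) := by
      show _ = _
      rw [hQQ, hcol (b*b) a Caf.eq, hcol a (b*b) CbbF.eq, ← habb]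
    have CPP_P : Commute ((a*(1-a*x))*(a*(1-a*x))) (a*(1-a*x)) :=
      (Commute.refl _).mul_left (Commute.refl _)
    have CQQ_Q : Commute ((b*(1-a*x))*(b*(1-a*x))) (b*(1-a*x)) :=
      (Commute.refl _).mul_left (Commute.refl _)
    have CS_R : Commute
        ((a*(1-a*x))*(a*(1-a*x)) + (b*(1-a*x))*(b*(1-a*x)))
        ((a*(1-a*x))*(b*(1-a*x)) + (b*(1-a*x))*(a*(1-a*x))) :=
      Commute.add_left
        ((CPP_P.mul_right CPP_Q).add_right (CPP_Q.mul_right CPP_P))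
        ((CQQ_P.mul_right CQQ_Q).add_right (CQQ_Q.mul_right CQQ_P))
    have hsq2 : (a*(1-a*x) + b*(1-a*x))^2 =
        ((a*(1-a*x))*(a*(1-a*x)) + (b*(1-a*x))*(b*(1-a*x))) +
        ((a*(1-a*x))*(b*(1-a*x)) + (b*(1-a*x))*(a*(1-a*x))) := by noncomm_ring
    have hnil2 : IsNilpotent ((a*(1-a*x) + b*(1-a*x))^2) := by
      rw [hsq2]; exact CS_R.isNilpotent_add hSnil hRnil
    obtain ⟨j, hj⟩ := hnil2
    exact ⟨2*j, by rw [pow_mul]; exact hj⟩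
end
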